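/- arXiv:1107.2873 — 9 statements merged into one kernel-verified Lean document; each statement's English description precedes it below -/
import Mathlib

section
/- For all integers m ≥ 1 and all θ with cos θ ∈ (0,1), the sum ∑_{n=1}^{m} U_n(cos θ)·(cos θ)^n equals (cos²θ/sin²θ)·[1 − (cos θ)^{m−1}·cos((m+1)θ)], where U_n is the Chebyshev polynomial of the second kind; in particular this sum is strictly positive. -/
/-!
With `c = cos θ`, the identity `U_n(c) sin θ = sin((n+1)θ)` and the addition formula for
`cos(nθ) = cos((n+1)θ - θ)` give `sin²θ · U_n(c) cⁿ = cⁿ cos(nθ) - cⁿ⁺¹ cos((n+1)θ)`, so the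
sum telescopes to `(c² - cᵐ⁺¹ cos((m+1)θ)) / sin²θ`. It is positive because
`cᵐ⁻¹ cos((m+1)θ) < 1`: for `m = 1` this is `cos 2θ = 2c² - 1 < 1`, and otherwise `cᵐ⁻¹ < 1`.
-/
open Real Polynomial Finset

theorem cos_pow_mul_cos_sub_cos_pow_succ_mul_cos (θ : ℝ) (n : ℕ) :
    cos θ ^ n * cos (n * θ) - cos θ ^ (n + 1) * cos ((n + 1) * θ) =
      sin θ ^ 2 * ((Chebyshev.U ℝ n).eval (cos θ) * cos θ ^ n) := by
  have hU := Chebyshev.U_real_cos θ n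
  have hcos : cos (n * θ) = cos ((n + 1) * θ) * cos θ + sin ((n + 1) * θ) * sin θ := by
    rw [← cos_sub]; ring_nf
  push_cast at hU
  rw [hcos, pow_succ]
  linear_combination (-(cos θ ^ n * sin θ)) * hU

theorem sin_sq_mul_sum_chebyshevU_mul_pow (θ : ℝ) (m : ℕ) :
    sin θ ^ 2 * ∑ n ∈ Icc 1 m, (Chebyshev.U ℝ n).eval (cos θ) * cos θ ^ n =
      cos θ ^ 2 - cos θ ^ (m + 1) * cos ((m + 1) * θ) := by
  have htelescope := Finset.sum_Ico_sub (fun n : ℕ => -(cos θ ^ n * cos (n * θ))) (Nat.le_add_left 1 m)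
  rw [mul_sum, ← Finset.Ico_add_one_right_eq_Icc]
  simp only [← cos_pow_mul_cos_sub_cos_pow_succ_mul_cos]
  push_cast at htelescope ⊢
  simp only [neg_sub_neg, one_mul, pow_one] at htelescope
  linear_combination htelescope

theorem cos_pow_mul_cos_add_two_mul_lt_one {θ : ℝ} (h0 : 0 ≤ cos θ) (h1 : cos θ < 1) (k : ℕ) :
    cos θ ^ k * cos ((k + 2) * θ) < 1 := by
  rcases k with _ | k
  · simp only [pow_zero, one_mul, CharP.cast_eq_zero, zero_add, cos_two_mul]
    nlinarith
  · calc cos θ ^ (k + 1) * cos ((↑(k + 1) + 2) * θ) ≤ cos θ ^ (k + 1) :=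
          mul_le_of_le_one_right (by positivity) (cos_le_one _)
      _ < 1 := pow_lt_one₀ h0 h1 (by omega)

/-- For all integers `m ≥ 1` and all `θ` with `cos θ ∈ (0,1)`, the partial sum
`∑_{n=1}^m U_n(cos θ) (cos θ)^n` of Chebyshev polynomials of the second kind equals
`(cos²θ / sin²θ) · (1 − (cos θ)^{m−1} cos((m+1)θ))`, and in particular is strictly positive. -/
theorem chebyshev_partial_sum (θ : ℝ) (h0 : 0 < Real.cos θ) (h1 : Real.cos θ < 1)
    (m : ℕ) (hm : 1 ≤ m) :
    (∑ n ∈ Finset.Icc 1 m,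
        (Polynomial.Chebyshev.U ℝ (n : ℤ)).eval (Real.cos θ) * (Real.cos θ) ^ n)
      = (Real.cos θ) ^ 2 / (Real.sin θ) ^ 2 *
          (1 - (Real.cos θ) ^ (m - 1) * Real.cos ((m + 1) * θ)) ∧
    0 < ∑ n ∈ Finset.Icc 1 m,
        (Polynomial.Chebyshev.U ℝ (n : ℤ)).eval (Real.cos θ) * (Real.cos θ) ^ n := by
  obtain ⟨k, rfl⟩ := Nat.exists_eq_add_of_le' hm
  have hs : sin θ ≠ 0 := by
    rw [Ne, sin_eq_zero_iff_cos_eq]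
    rintro (h | h) <;> linarith
  have hsum := sin_sq_mul_sum_chebyshevU_mul_pow θ (k + 1)
  have hlt := cos_pow_mul_cos_add_two_mul_lt_one h0.le h1 k
  have hclosed : ∑ n ∈ Icc 1 (k + 1), (Chebyshev.U ℝ n).eval (cos θ) * cos θ ^ n =
      cos θ ^ 2 / sin θ ^ 2 * (1 - cos θ ^ k * cos ((k + 2) * θ)) := by
    rw [div_mul_eq_mul_div, eq_div_iff (pow_ne_zero 2 hs)]
    push_cast at hsum
    rw [show (k : ℝ) + 1 + 1 = k + 2 by ring] at hsum
    linear_combination hsum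
  refine ⟨by simpa [add_assoc, one_add_one_eq_two] using hclosed, ?_⟩
  rw [hclosed]
  have hfactor : 0 < 1 - cos θ ^ k * cos ((k + 2) * θ) := sub_pos.mpr hlt
  positivity
end

section
/- Let N be a nonnegative K×K real matrix with spectral radius ρ(N) < 1 and with e'N ≤ e' entrywise, where e is the all-ones vector. Then for every y ∈ (0,1), the matrix y(I−N)² + (1−y)I is invertible and the row vector e'(y(I−N)² + (1−y)I)^{−1} is entrywise strictly positive. -/
/-!
Write `y(I - N)² + (1 - y)I = 1 - 2yN + yN²`. The Taylor coefficients `c k` of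
`1 / (1 - 2yz + yz²)` are `Im (a^(k+1)) / Im a` with `a = y + i√(y(1-y))`, `|a| = √y < 1`, so
`R = ∑ c k • N^k` converges (the powers of `N` have entries in `[0, 1]`) and inverts the matrix.
The column sums `t k` of `N^k` decrease from `t 0 = 1`, and the partial sums of `c` are
`(1 - Re a^(n+1)) / (1 - y) ≥ (1 - √y) / (1 - y) > 0`, so by Abel summation every column sum
`∑ c k * t k` of `R` is at least `(1 - √y) / (1 - y)`.
-/

open Matrix Finset

theorem mul_le_sum_range_mul_of_antitone {c t : ℕ → ℝ} {s : ℝ}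
    (hc : ∀ n, s ≤ ∑ k ∈ range (n + 1), c k) (ht : Antitone t) (ht0 : ∀ n, 0 ≤ t n) (n : ℕ) :
    s * t 0 ≤ ∑ k ∈ range (n + 1), c k * t k := by
  suffices h : ∀ n, s * (t 0 - t n) + (∑ k ∈ range (n + 1), c k) * t n
      ≤ ∑ k ∈ range (n + 1), c k * t k by
    nlinarith [h n, hc n, ht0 n]
  intro n
  induction n with
  | zero => simp
  | succ n ih =>
    rw [sum_range_succ c, sum_range_succ (fun k => c k * t k)]
    nlinarith [hc n, ht n.le_succ]

theorem mul_le_tsum_mul_of_antitone {c t : ℕ → ℝ} {s : ℝ}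
    (hc : ∀ n, s ≤ ∑ k ∈ range (n + 1), c k) (ht : Antitone t) (ht0 : ∀ n, 0 ≤ t n)
    (hct : Summable fun k => c k * t k) :
    s * t 0 ≤ ∑' k, c k * t k :=
  ge_of_tendsto' (hct.hasSum.tendsto_sum_nat.comp (Filter.tendsto_add_atTop_nat 1))
    (mul_le_sum_range_mul_of_antitone hc ht ht0)

theorem mul_tsum_smul_pow_eq_one {R A : Type*} [CommRing R] [Ring A] [Algebra R A]
    [TopologicalSpace A] [IsTopologicalRing A] [T2Space A] {α β : R} {c : ℕ → R}
    (h0 : c 0 = 1) (h1 : c 1 = α) (hrec : ∀ k, c (k + 2) = α * c (k + 1) + β * c k) {x : A}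
    (hs : Summable fun k => c k • x ^ k) :
    (1 - α • x - β • x ^ 2) * ∑' k, c k • x ^ k = 1 := by
  have hs1 : Summable fun k => c (k + 1) • x ^ (k + 1) := (summable_nat_add_iff 1).2 hs
  have hS1 : ∑' k, c (k + 1) • x ^ (k + 1) = ∑' k, c k • x ^ k - 1 := by
    rw [hs.tsum_eq_zero_add, h0]; simp
  have hS : ∑' k, c k • x ^ k = 1 + α • x + ∑' k, c (k + 2) • x ^ (k + 2) := by
    rw [hs.tsum_eq_zero_add, hs1.tsum_eq_zero_add, h0, h1]; simp [add_assoc]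
  set S := ∑' k, c k • x ^ k
  have hT : ∑' k, c (k + 2) • x ^ (k + 2)
      = α • x * ∑' k, c (k + 1) • x ^ (k + 1) + β • x ^ 2 * S := by
    rw [← hs1.tsum_mul_left, ← hs.tsum_mul_left, ← (hs1.mul_left _).tsum_add (hs.mul_left _)]
    congr 1 with k
    simp only [hrec, add_smul, mul_smul, smul_mul_assoc, mul_smul_comm, ← pow_succ', ← pow_add,
      add_comm 2 k, smul_comm α, smul_comm β]
  have key : S = 1 + α • x * S + β • x ^ 2 * S := by
    conv_lhs => rw [hS, hT, hS1]
    rw [mul_sub, mul_one]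
    abel
  calc (1 - α • x - β • x ^ 2) * S = S - α • x * S - β • x ^ 2 * S := by noncomm_ring
    _ = 1 := by nth_rewrite 1 [key]; abel

noncomputable def recipRoot (y : ℝ) : ℂ := ⟨y, √(y * (1 - y))⟩

/-- The Taylor coefficients of `1 / (1 - 2yz + yz²)`, whose roots are the reciprocals of
`recipRoot y` and its conjugate. -/
noncomputable def quadInvCoeff (y : ℝ) (k : ℕ) : ℝ :=
  (recipRoot y ^ (k + 1)).im / (recipRoot y).im

section QuadInvCoeff

variable {y : ℝ}

@[simp] theorem recipRoot_re : (recipRoot y).re = y := rfl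

theorem recipRoot_im_sq (hy0 : 0 ≤ y) (hy1 : y ≤ 1) : (recipRoot y).im ^ 2 = y * (1 - y) :=
  Real.sq_sqrt (mul_nonneg hy0 (sub_nonneg.2 hy1))

theorem recipRoot_im_pos (hy0 : 0 < y) (hy1 : y < 1) : 0 < (recipRoot y).im :=
  Real.sqrt_pos.2 (mul_pos hy0 (sub_pos.2 hy1))

theorem recipRoot_sq (hy0 : 0 ≤ y) (hy1 : y ≤ 1) :
    recipRoot y ^ 2 = 2 * y * recipRoot y - y := by
  have := recipRoot_im_sq hy0 hy1
  apply Complex.ext <;>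
    simp only [sq, Complex.mul_re, Complex.mul_im, Complex.sub_re, Complex.sub_im, recipRoot_re,
      Complex.re_ofNat, Complex.im_ofNat, Complex.ofReal_re, Complex.ofReal_im, mul_zero, zero_mul,
      sub_zero, add_zero] <;>
    nlinarith

theorem norm_recipRoot (hy0 : 0 ≤ y) (hy1 : y ≤ 1) : ‖recipRoot y‖ = √y := by
  rw [Complex.norm_def, Complex.normSq_apply, recipRoot_re, ← sq, ← sq, recipRoot_im_sq hy0 hy1]
  ring_nf

theorem quadInvCoeff_zero (hy0 : 0 < y) (hy1 : y < 1) : quadInvCoeff y 0 = 1 := by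
  simp [quadInvCoeff, (recipRoot_im_pos hy0 hy1).ne']

theorem quadInvCoeff_one (hy0 : 0 < y) (hy1 : y < 1) : quadInvCoeff y 1 = 2 * y := by
  rw [quadInvCoeff, recipRoot_sq hy0.le hy1.le]
  simp [Complex.mul_im, (recipRoot_im_pos hy0 hy1).ne']

theorem quadInvCoeff_add_two (hy0 : 0 ≤ y) (hy1 : y ≤ 1) (k : ℕ) :
    quadInvCoeff y (k + 2) = 2 * y * quadInvCoeff y (k + 1) + -y * quadInvCoeff y k := by
  have h : recipRoot y ^ (k + 2 + 1)
      = 2 * y * recipRoot y ^ (k + 1 + 1) - y * recipRoot y ^ (k + 1) := by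
    rw [show k + 2 + 1 = k + 1 + 2 by ring, pow_add, recipRoot_sq hy0 hy1]; ring
  simp only [quadInvCoeff, h, Complex.sub_im, Complex.mul_im, Complex.mul_re, Complex.re_ofNat,
    Complex.im_ofNat, Complex.ofReal_re, Complex.ofReal_im, mul_zero, zero_mul, sub_zero, add_zero]
  ring

theorem abs_quadInvCoeff_le (hy0 : 0 ≤ y) (hy1 : y ≤ 1) (k : ℕ) :
    |quadInvCoeff y k| ≤ √y ^ (k + 1) / (recipRoot y).im := by
  rw [quadInvCoeff, abs_div, abs_of_nonneg (show 0 ≤ (recipRoot y).im from Real.sqrt_nonneg _)]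
  refine div_le_div_of_nonneg_right ?_ (Real.sqrt_nonneg _)
  calc _ ≤ ‖recipRoot y ^ (k + 1)‖ := Complex.abs_im_le_norm _
    _ = _ := by rw [norm_pow, norm_recipRoot hy0 hy1]

theorem summable_abs_quadInvCoeff (hy0 : 0 ≤ y) (hy1 : y < 1) :
    Summable fun k => |quadInvCoeff y k| := by
  refine .of_nonneg_of_le (fun _ => abs_nonneg _) (abs_quadInvCoeff_le hy0 hy1.le) ?_
  have hr : √y < 1 := (Real.sqrt_lt' one_pos).2 (by linarith)
  simpa only [pow_succ, div_eq_mul_inv, mul_assoc] using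
    (summable_geometric_of_lt_one (Real.sqrt_nonneg y) hr).mul_right (√y * (recipRoot y).im⁻¹)

theorem sum_range_quadInvCoeff_mul (hy0 : 0 < y) (hy1 : y < 1) (n : ℕ) :
    (∑ k ∈ range n, quadInvCoeff y k) * (1 - y) = 1 - (recipRoot y ^ n).re := by
  have hw := recipRoot_im_pos hy0 hy1
  induction n with
  | zero => simp
  | succ n ih =>
    rw [sum_range_succ, add_mul, ih, quadInvCoeff, pow_succ, Complex.mul_re, Complex.mul_im]
    field_simp
    rw [recipRoot_re]
    linear_combination (-(recipRoot y ^ n).im) * recipRoot_im_sq hy0.le hy1.le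

theorem le_sum_range_quadInvCoeff (hy0 : 0 < y) (hy1 : y < 1) (n : ℕ) :
    (1 - √y) / (1 - y) ≤ ∑ k ∈ range (n + 1), quadInvCoeff y k := by
  rw [div_le_iff₀ (by linarith), sum_range_quadInvCoeff_mul hy0 hy1, sub_le_sub_iff_left]
  calc (recipRoot y ^ (n + 1)).re ≤ ‖recipRoot y ^ (n + 1)‖ := Complex.re_le_norm _
    _ = √y ^ (n + 1) := by rw [norm_pow, norm_recipRoot hy0.le hy1.le]
    _ ≤ √y := pow_le_of_le_one (Real.sqrt_nonneg _) (Real.sqrt_le_one.2 hy1.le) n.succ_ne_zero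

end QuadInvCoeff

section Substochastic

variable {n α : Type*} [Fintype n] [DecidableEq n] [CommSemiring α] [PartialOrder α]
  [IsOrderedRing α] {N : Matrix n n α}

theorem sum_pow_succ_apply_le (hN : ∀ i j, 0 ≤ N i j) (hcol : ∀ j, ∑ i, N i j ≤ 1)
    (k : ℕ) (j : n) :
    ∑ i, (N ^ (k + 1)) i j ≤ ∑ i, (N ^ k) i j := by
  simp only [pow_succ', mul_apply]
  rw [sum_comm]
  simp_rw [← sum_mul]
  exact sum_le_sum fun l _ => mul_le_of_le_one_left (pow_apply_nonneg hN k l j) (hcol l)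

theorem antitone_sum_pow_apply (hN : ∀ i j, 0 ≤ N i j) (hcol : ∀ j, ∑ i, N i j ≤ 1) (j : n) :
    Antitone fun k => ∑ i, (N ^ k) i j :=
  antitone_nat_of_succ_le fun k => sum_pow_succ_apply_le hN hcol k j

theorem pow_apply_le_one (hN : ∀ i j, 0 ≤ N i j) (hcol : ∀ j, ∑ i, N i j ≤ 1) (k : ℕ) (i j : n) :
    (N ^ k) i j ≤ 1 :=
  calc (N ^ k) i j ≤ ∑ i, (N ^ k) i j :=
        single_le_sum (fun i _ => pow_apply_nonneg hN k i j) (mem_univ i)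
    _ ≤ ∑ i, (N ^ 0) i j := antitone_sum_pow_apply hN hcol j k.zero_le
    _ = 1 := by simp [one_apply]

end Substochastic

theorem summable_smul_pow_of_substochastic {n : Type*} [Fintype n] [DecidableEq n]
    {N : Matrix n n ℝ} (hN : ∀ i j, 0 ≤ N i j) (hcol : ∀ j, ∑ i, N i j ≤ 1) {c : ℕ → ℝ}
    (hc : Summable fun k => |c k|) : Summable fun k => c k • N ^ k := by
  refine Pi.summable.2 fun i => Pi.summable.2 fun j => ?_
  refine .of_norm_bounded hc fun k => ?_
  rw [Matrix.smul_apply, smul_eq_mul, norm_mul, Real.norm_eq_abs, Real.norm_eq_abs,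
    abs_of_nonneg (pow_apply_nonneg hN k i j)]
  exact mul_le_of_le_one_right (abs_nonneg _) (pow_apply_le_one hN hcol k i j)

theorem rowvec_pos_of_substochastic_general {K : ℕ} (N : Matrix (Fin K) (Fin K) ℝ)
    (hN : ∀ i j, 0 ≤ N i j)
    (hcol : ∀ j, ∑ i, N i j ≤ 1)
    (y : ℝ) (hy : y ∈ Set.Ioo (0:ℝ) 1) :
    IsUnit (y • (1 - N) ^ 2 + (1 - y) • (1 : Matrix (Fin K) (Fin K) ℝ)) ∧
    ∀ j, 0 < ∑ i,
      ((y • (1 - N) ^ 2 + (1 - y) • (1 : Matrix (Fin K) (Fin K) ℝ))⁻¹ :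
        Matrix (Fin K) (Fin K) ℝ) i j := by
  obtain ⟨hy0, hy1⟩ := hy
  have hs : Summable fun k => quadInvCoeff y k • N ^ k :=
    summable_smul_pow_of_substochastic hN hcol (summable_abs_quadInvCoeff hy0.le hy1)
  have hM : y • (1 - N) ^ 2 + (1 - y) • (1 : Matrix (Fin K) (Fin K) ℝ)
      = 1 - (2 * y) • N - (-y) • N ^ 2 := by
    rw [show (1 - N) ^ 2 = 1 - 2 • N + N ^ 2 by noncomm_ring]
    module
  have hR : (y • (1 - N) ^ 2 + (1 - y) • (1 : Matrix (Fin K) (Fin K) ℝ)) *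
      ∑' k, quadInvCoeff y k • N ^ k = 1 := by
    rw [hM]
    exact mul_tsum_smul_pow_eq_one (quadInvCoeff_zero hy0 hy1) (quadInvCoeff_one hy0 hy1)
      (quadInvCoeff_add_two hy0.le hy1.le) hs
  refine ⟨.of_mul_eq_one _ hR, fun j => ?_⟩
  have hcolR : HasSum (fun k => quadInvCoeff y k * ∑ i, (N ^ k) i j)
      (∑ i, (∑' k, quadInvCoeff y k • N ^ k) i j) := by
    simpa only [Matrix.smul_apply, smul_eq_mul, mul_sum] using
      hasSum_sum fun i _ => Pi.hasSum.1 (Pi.hasSum.1 hs.hasSum i) j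
  rw [inv_eq_right_inv hR, ← hcolR.tsum_eq]
  calc 0 < (1 - √y) / (1 - y) * ∑ i, (N ^ 0) i j := by
        simp [one_apply, hy1, (Real.sqrt_lt' one_pos).2 (by linarith : y < 1 ^ 2)]
    _ ≤ _ := mul_le_tsum_mul_of_antitone (le_sum_range_quadInvCoeff hy0 hy1)
      (antitone_sum_pow_apply hN hcol j) (fun k => sum_nonneg fun i _ => pow_apply_nonneg hN k i j)
      hcolR.summable

/-- If `N` is an entrywise nonnegative `K×K` real matrix with spectral radius `< 1`
(all complex eigenvalues of modulus `< 1`) and the column sums of `N` are at most `1`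
(`e'N ≤ e'`), then for every `y ∈ (0,1)` the matrix `y(I−N)² + (1−y)I` is invertible
and every entry of the row vector `e'(y(I−N)² + (1−y)I)⁻¹` is strictly positive. -/
theorem rowvec_pos_of_substochastic {K : ℕ} (N : Matrix (Fin K) (Fin K) ℝ)
    (hN : ∀ i j, 0 ≤ N i j)
    (hρ : ∀ μ ∈ spectrum ℂ (N.map (Complex.ofReal)), ‖μ‖ < 1)
    (hcol : ∀ j, ∑ i, N i j ≤ 1)
    (y : ℝ) (hy : y ∈ Set.Ioo (0:ℝ) 1) :
    IsUnit (y • (1 - N) ^ 2 + (1 - y) • (1 : Matrix (Fin K) (Fin K) ℝ)) ∧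
    ∀ j, 0 < ∑ i,
      ((y • (1 - N) ^ 2 + (1 - y) • (1 : Matrix (Fin K) (Fin K) ℝ))⁻¹ :
        Matrix (Fin K) (Fin K) ℝ) i j :=
  rowvec_pos_of_substochastic_general N hN hcol y hy
end

section
/- Let R be a nonsingular M-matrix of size K×K (R = sI − N with N nonnegative and ρ(N) < s) satisfying e'R ≥ 0' entrywise. Then for every λ > 0, the matrix R² + λI is invertible and the row vector e'(R² + λI)^{−1} is entrywise strictly positive. -/
/-!
Write `R = s - N` and `A = R² + λ`. Over `ℂ`, `A = (R - i√λ)(R + i√λ)`, and since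
`ρ(N) < s ≤ |s ± i√λ|` both factors are inverted by Neumann series in `N`; in particular `A` is
invertible. Taking real parts, `R A⁻¹ = Re (R - i√λ)⁻¹ = ∑ Re (s - i√λ)^{-(p+1)} Nᵖ`, while
`R⁻¹ = ∑ s^{-(p+1)} Nᵖ`. Hence `λ R⁻¹ A⁻¹ = R⁻¹ - R A⁻¹ = ∑ dₚ Nᵖ` with
`dₚ = s^{-(p+1)} - Re (s - i√λ)^{-(p+1)} > 0`, so `R⁻¹ A⁻¹ ≥ 0` vanishes only where `R⁻¹` does.
Finally `e'A⁻¹ = (e'R) (R⁻¹ A⁻¹)`, and `(e'R) R⁻¹ = e'` provides, for each column `j`, an index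
`k` with `(e'R)ₖ > 0` and `(R⁻¹)ₖⱼ > 0`.
-/

open Complex

theorem spectrum.hasSum_smul_pow_inverse_one_sub_smul {A : Type*} [NormedRing A]
    [NormedAlgebra ℂ A] [CompleteSpace A] {a : A} {z : ℂ}
    (h : ‖z‖ₑ < (spectralRadius ℂ a)⁻¹) :
    HasSum (fun n => z ^ n • a ^ n) (Ring.inverse (1 - z • a)) := by
  obtain ⟨r, hzr, hr⟩ := ENNReal.lt_iff_exists_nnreal_btwn.mp h
  have hzr' : ‖z‖₊ < r := by exact_mod_cast hzr
  have H := (hasFPowerSeriesOnBall_inverse_one_sub_smul ℂ a).exchange_radius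
    ((differentiableOn_inverse_one_sub_smul hr).hasFPowerSeriesOnBall (pos_of_gt hzr'))
  simpa using H.hasSum (y := z) (by simpa [edist_zero_right] using NNReal.coe_lt_coe.2 hzr')

theorem Complex.ofReal_re_le_enorm (c : ℂ) : ENNReal.ofReal c.re ≤ ‖c‖ₑ := by
  rw [← ofReal_norm]
  exact ENNReal.ofReal_le_ofReal (re_le_norm c)

theorem Complex.re_inv_pow_lt {c : ℂ} {s : ℝ} (hs : 0 < s) (hc : s < ‖c‖) {k : ℕ} (hk : k ≠ 0) :
    (c⁻¹ ^ k).re < s⁻¹ ^ k :=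
  calc (c⁻¹ ^ k).re ≤ ‖c⁻¹ ^ k‖ := re_le_norm _
    _ = ‖c‖⁻¹ ^ k := by rw [norm_pow, norm_inv]
    _ < s⁻¹ ^ k := pow_lt_pow_left₀ (inv_strictAnti₀ hs hc) (by positivity) hk

theorem pos_of_hasSum_of_pos {a b x : ℕ → ℝ} {u v : ℝ} (hx : ∀ p, 0 ≤ x p) (hb : ∀ p, 0 < b p)
    (hu : HasSum (fun p => a p * x p) u) (hv : HasSum (fun p => b p * x p) v) (hpos : 0 < u) :
    0 < v := by
  obtain ⟨p, hp⟩ : ∃ p, x p ≠ 0 := by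
    by_contra! h
    exact hpos.ne' (hu.unique (by simp [h]))
  calc 0 < b p * x p := mul_pos (hb p) ((hx p).lt_of_ne' hp)
    _ ≤ v := le_hasSum hv p fun q _ => mul_nonneg (hb q).le (hx q)

namespace Matrix

variable {n : Type*} [DecidableEq n]

theorem map_ofReal_smul_one_sub (c : ℝ) (N : Matrix n n ℝ) :
    (c • 1 - N).map ofReal = (c : ℂ) • 1 - N.map ofReal := by
  ext i j
  by_cases h : i = j <;> simp [h]

variable [Fintype n]

attribute [local instance] Matrix.linftyOpNormedRing Matrix.linftyOpNormedAlgebra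

theorem spectralRadius_lt_ofReal (M : Matrix n n ℂ) {r : ℝ} (hr : 0 < r)
    (h : ∀ k ∈ spectrum ℂ M, ‖k‖ < r) : spectralRadius ℂ M < ENNReal.ofReal r := by
  have : CompleteSpace (Matrix n n ℂ) := FiniteDimensional.complete ℂ _
  rcases (spectrum ℂ M).eq_empty_or_nonempty with he | hne
  · simpa [spectralRadius, he] using hr
  · exact spectrum.spectralRadius_lt_of_forall_lt_of_nonempty hne fun k hk =>
      Real.lt_toNNReal_iff_coe_lt.2 (h k hk)

theorem isUnit_smul_one_sub_and_hasSum_inv (M : Matrix n n ℂ) {c : ℂ}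
    (h : spectralRadius ℂ M < ‖c‖ₑ) :
    IsUnit (c • 1 - M) ∧ HasSum (fun p => c⁻¹ ^ (p + 1) • M ^ p) (c • 1 - M)⁻¹ := by
  have : CompleteSpace (Matrix n n ℂ) := FiniteDimensional.complete ℂ _
  have hc : c ≠ 0 := by rintro rfl; simp at h
  have h' : ‖c⁻¹‖ₑ < (spectralRadius ℂ M)⁻¹ := by
    rw [enorm_inv hc]; exact ENNReal.inv_lt_inv.2 h
  have hunit : IsUnit (1 - c⁻¹ • M) :=
    spectrum.isUnit_one_sub_smul_of_lt_inv_radius (by exact_mod_cast h')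
  have heq : c • 1 - M = c • (1 - c⁻¹ • M) := by
    rw [smul_sub, smul_smul, mul_inv_cancel₀ hc, one_smul]
  have hinv : (c • 1 - M)⁻¹ = c⁻¹ • Ring.inverse (1 - c⁻¹ • M) := by
    refine inv_eq_right_inv ?_
    rw [heq, smul_mul_smul, mul_inv_cancel₀ hc, one_smul, Ring.mul_inverse_cancel _ hunit]
  refine ⟨heq ▸ hunit.smul (Units.mk0 c hc), hinv ▸ ?_⟩
  have H := (spectrum.hasSum_smul_pow_inverse_one_sub_smul h').const_smul c⁻¹
  simp only [smul_smul, ← pow_succ'] at H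
  exact H

theorem det_map_ofReal (X : Matrix n n ℝ) : (X.map ofReal).det = X.det :=
  (RingHom.map_det ofRealHom X).symm

theorem map_ofReal_inv (X : Matrix n n ℝ) : X⁻¹.map ofReal = (X.map ofReal)⁻¹ := by
  have h : X.adjugate.map ofReal = (X.map ofReal).adjugate := RingHom.map_adjugate ofRealHom X
  rw [inv_def, inv_def, ← h, det_map_ofReal, Ring.inverse_eq_inv, Ring.inverse_eq_inv]
  ext i j
  simp

theorem isUnit_map_ofReal_iff {X : Matrix n n ℝ} : IsUnit (X.map ofReal) ↔ IsUnit X := by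
  rw [isUnit_iff_isUnit_det, isUnit_iff_isUnit_det, det_map_ofReal, isUnit_iff_ne_zero,
    isUnit_iff_ne_zero, ofReal_ne_zero]

theorem hasSum_re_inv_smul_one_sub_map_ofReal (N : Matrix n n ℝ) {c : ℂ}
    (h : spectralRadius ℂ (N.map ofReal) < ‖c‖ₑ) (i j : n) :
    HasSum (fun p => (c⁻¹ ^ (p + 1)).re * (N ^ p) i j) ((c • 1 - N.map ofReal)⁻¹ i j).re := by
  have H := Complex.hasSum_re
    (Pi.hasSum.1 (Pi.hasSum.1 (isUnit_smul_one_sub_and_hasSum_inv _ h).2 i) j)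
  have hpow (p : ℕ) : N.map ofReal ^ p = (N ^ p).map ofReal := (Matrix.map_pow N ofRealHom p).symm
  simpa only [hpow, smul_apply, map_apply, smul_eq_mul, re_mul_ofReal] using H

theorem map_ofReal_eq_mapMatrix (X : Matrix n n ℝ) : X.map ofReal = ofRealHom.mapMatrix X := rfl

theorem map_ofReal_sq_add_smul_one (R : Matrix n n ℝ) (t : ℝ) :
    (R ^ 2 + t ^ 2 • 1).map ofReal =
      (R.map ofReal - (t * I) • 1) * (R.map ofReal + (t * I) • 1) := by
  have hscalar : ofRealHom.mapMatrix (t ^ 2 • 1 : Matrix n n ℝ) = (t : ℂ) ^ 2 • 1 := by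
    ext i j
    by_cases h : i = j <;> simp [h]
  simp only [map_ofReal_eq_mapMatrix, map_add, map_pow, hscalar]
  simp only [sub_mul, mul_add, smul_mul_assoc, mul_smul_comm, one_mul, mul_one, pow_two]
  match_scalars <;> ring_nf
  simp [I_sq]

theorem inv_map_ofReal_sub_smul_one (R : Matrix n n ℝ) (t : ℝ) (hA : IsUnit (R ^ 2 + t ^ 2 • 1)) :
    (R.map ofReal - (t * I) • 1)⁻¹ =
      (R * (R ^ 2 + t ^ 2 • 1)⁻¹).map ofReal + (t * I) • (R ^ 2 + t ^ 2 • 1)⁻¹.map ofReal := by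
  set A := R ^ 2 + t ^ 2 • (1 : Matrix n n ℝ)
  refine inv_eq_right_inv ?_
  calc (R.map ofReal - (t * I) • 1) * ((R * A⁻¹).map ofReal + (t * I) • A⁻¹.map ofReal)
      = A.map ofReal * A⁻¹.map ofReal := by
        rw [map_ofReal_sq_add_smul_one, mul_assoc, add_mul, smul_mul_assoc, one_mul]
        simp only [map_ofReal_eq_mapMatrix, map_mul]
    _ = 1 := by
        simp only [map_ofReal_eq_mapMatrix, ← map_mul,
          mul_nonsing_inv _ ((isUnit_iff_isUnit_det _).1 hA), map_one]

theorem smul_inv_mul_inv_sq_add_smul_one {R : Matrix n n ℝ} (hR : IsUnit R) {lam : ℝ}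
    (hA : IsUnit (R ^ 2 + lam • 1)) :
    lam • (R⁻¹ * (R ^ 2 + lam • 1)⁻¹) = R⁻¹ - R * (R ^ 2 + lam • 1)⁻¹ := by
  have hR' : lam • R⁻¹ = R⁻¹ * (R ^ 2 + lam • 1) - R := by
    rw [mul_add, pow_two, ← mul_assoc, nonsing_inv_mul _ ((isUnit_iff_isUnit_det _).1 hR),
      one_mul, mul_smul_comm, mul_one, add_sub_cancel_left]
  rw [← smul_mul_assoc, hR', sub_mul,
    mul_nonsing_inv_cancel_right _ _ ((isUnit_iff_isUnit_det _).1 hA)]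

theorem sum_mul_apply_pos {R B : Matrix n n ℝ} (hR : IsUnit R) (hcol : ∀ j, 0 ≤ ∑ i, R i j)
    (hB : ∀ k j, 0 ≤ B k j) (hsupp : ∀ k j, 0 < R⁻¹ k j → 0 < B k j) (j : n) :
    0 < ∑ i, (R * B) i j := by
  have hsum (M : Matrix n n ℝ) : ∑ i, (R * M) i j = ∑ k, (∑ i, R i k) * M k j := by
    simp only [mul_apply, Finset.sum_mul]
    exact Finset.sum_comm
  have hone : ∑ k, (∑ i, R i k) * R⁻¹ k j = 1 := by
    rw [← hsum, mul_nonsing_inv _ ((isUnit_iff_isUnit_det _).1 hR)]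
    simp [one_apply]
  obtain ⟨k, -, hk⟩ := Finset.exists_lt_of_sum_lt (f := fun _ => 0)
    (g := fun k => (∑ i, R i k) * R⁻¹ k j) (s := Finset.univ) (by simp [hone])
  have hcolk : 0 < ∑ i, R i k := (hcol k).lt_of_ne (by intro h; simp [← h] at hk)
  rw [hsum]
  exact Finset.sum_pos' (fun k _ => mul_nonneg (hcol k) (hB k j))
    ⟨k, Finset.mem_univ k, mul_pos hcolk (hsupp k j (pos_of_mul_pos_right hk (hcol k)))⟩

section MMatrix

variable {N : Matrix n n ℝ} {s : ℝ}

theorem isUnit_smul_one_sub_and_hasSum_inv_apply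
    (hσ : spectralRadius ℂ (N.map ofReal) < ENNReal.ofReal s) :
    IsUnit (s • 1 - N) ∧
      ∀ i j, HasSum (fun p => s⁻¹ ^ (p + 1) * (N ^ p) i j) ((s • 1 - N)⁻¹ i j) := by
  have hc : spectralRadius ℂ (N.map ofReal) < ‖(s : ℂ)‖ₑ :=
    hσ.trans_le (by simpa using ofReal_re_le_enorm s)
  refine ⟨isUnit_map_ofReal_iff.1 ?_, fun i j => ?_⟩
  · rw [map_ofReal_smul_one_sub]
    exact (isUnit_smul_one_sub_and_hasSum_inv _ hc).1
  · have H := hasSum_re_inv_smul_one_sub_map_ofReal N hc i j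
    rw [← map_ofReal_smul_one_sub, ← map_ofReal_inv] at H
    simpa [← ofReal_inv, ← ofReal_pow] using H

theorem isUnit_sq_add_smul_one_and_hasSum_mul_inv_apply
    (hσ : spectralRadius ℂ (N.map ofReal) < ENNReal.ofReal s) {lam : ℝ} (hlam : 0 ≤ lam) :
    IsUnit ((s • 1 - N) ^ 2 + lam • 1) ∧
      ∀ i j, HasSum (fun p => (((s : ℂ) - √lam * I)⁻¹ ^ (p + 1)).re * (N ^ p) i j)
        (((s • 1 - N) * ((s • 1 - N) ^ 2 + lam • 1)⁻¹ : Matrix n n ℝ) i j) := by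
  set t := √lam
  have ht : t ^ 2 = lam := Real.sq_sqrt hlam
  have hc (c : ℂ) (hre : c.re = s) : spectralRadius ℂ (N.map ofReal) < ‖c‖ₑ :=
    hσ.trans_le (hre ▸ ofReal_re_le_enorm c)
  have hminus : (s • 1 - N).map ofReal - (t * I) • 1 = ((s : ℂ) - t * I) • 1 - N.map ofReal := by
    rw [map_ofReal_smul_one_sub, sub_smul]; abel
  have hplus : (s • 1 - N).map ofReal + (t * I) • 1 = ((s : ℂ) + t * I) • 1 - N.map ofReal := by
    rw [map_ofReal_smul_one_sub, add_smul]; abel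
  have hA : IsUnit ((s • 1 - N) ^ 2 + t ^ 2 • 1) := by
    rw [← isUnit_map_ofReal_iff, map_ofReal_sq_add_smul_one, hminus, hplus]
    exact (isUnit_smul_one_sub_and_hasSum_inv _ (hc _ (by simp))).1.mul
      (isUnit_smul_one_sub_and_hasSum_inv _ (hc _ (by simp))).1
  refine ⟨ht ▸ hA, fun i j => ?_⟩
  have H := hasSum_re_inv_smul_one_sub_map_ofReal N (hc ((s : ℂ) - t * I) (by simp)) i j
  rw [← hminus, inv_map_ofReal_sub_smul_one _ t hA] at H
  simpa [ht] using H

end MMatrix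

end Matrix

open Matrix

/-- Let `R = sI − N` be a nonsingular M-matrix (`s > 0`, `N` entrywise nonnegative,
spectral radius `ρ(N) < s`) with all column sums of `R` nonnegative (`e'R ≥ 0'`).
Then for every `λ > 0`, the matrix `R² + λI` is invertible and every entry of the
row vector `e'(R² + λI)⁻¹` is strictly positive. -/
theorem rowvec_pos_Msq_add {K : ℕ} (R N : Matrix (Fin K) (Fin K) ℝ) (s : ℝ)
    (hs : 0 < s) (hN : ∀ i j, 0 ≤ N i j)
    (hR : R = s • (1 : Matrix (Fin K) (Fin K) ℝ) - N)
    (hρ : ∀ μ ∈ spectrum ℂ (N.map (Complex.ofReal)), ‖μ‖ < s)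
    (heR : ∀ j, 0 ≤ ∑ i, R i j)
    (lam : ℝ) (hlam : 0 < lam) :
    IsUnit (R ^ 2 + lam • (1 : Matrix (Fin K) (Fin K) ℝ)) ∧
    ∀ j, 0 < ∑ i, (R ^ 2 + lam • (1 : Matrix (Fin K) (Fin K) ℝ))⁻¹ i j := by
  have hσ := spectralRadius_lt_ofReal _ hs hρ
  obtain ⟨hRu, hRinv⟩ := isUnit_smul_one_sub_and_hasSum_inv_apply hσ
  obtain ⟨hAu, hRA⟩ := isUnit_sq_add_smul_one_and_hasSum_mul_inv_apply hσ hlam.le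
  rw [← hR] at hRu hRinv hAu hRA
  set A := R ^ 2 + lam • (1 : Matrix (Fin K) (Fin K) ℝ)
  set c : ℂ := s - √lam * I
  have hcoef (p : ℕ) : 0 < s⁻¹ ^ (p + 1) - (c⁻¹ ^ (p + 1)).re := by
    refine sub_pos.2 (re_inv_pow_lt hs ?_ p.succ_ne_zero)
    have him : c.im ≠ 0 := by simp [c, (Real.sqrt_pos.2 hlam).ne']
    simpa [c, abs_of_pos hs] using abs_re_lt_norm.2 him
  have hB (k j : Fin K) : HasSum (fun p => (s⁻¹ ^ (p + 1) - (c⁻¹ ^ (p + 1)).re) * (N ^ p) k j)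
      (lam * (R⁻¹ * A⁻¹) k j) := by
    have h : lam * (R⁻¹ * A⁻¹) k j = R⁻¹ k j - (R * A⁻¹) k j :=
      congrFun (congrFun (smul_inv_mul_inv_sq_add_smul_one hRu hAu) k) j
    rw [h]
    simpa only [sub_mul] using (hRinv k j).sub (hRA k j)
  refine ⟨hAu, fun j => ?_⟩
  rw [← mul_nonsing_inv_cancel_left R A⁻¹ ((isUnit_iff_isUnit_det _).1 hRu)]
  refine sum_mul_apply_pos hRu heR (fun k j => ?_) (fun k j hkj => ?_) j
  · exact nonneg_of_mul_nonneg_right ((hB k j).nonneg fun p =>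
      mul_nonneg (hcoef p).le (pow_apply_nonneg hN p k j)) hlam
  · exact pos_of_mul_pos_right (pos_of_hasSum_of_pos (pow_apply_nonneg hN · k j) hcoef
      (hRinv k j) (hB k j) hkj) hlam.le
end

section
/- Let R be a nonsingular M-matrix with e'R ≥ 0' entrywise, and let p be a nonnegative probability vector (p ≥ 0, e'p = 1). Then the matrix product R²(I − pe') has no real negative eigenvalue. -/
/-!
Suppose `R²(I - pe')v = tv` with `t = -c² < 0`, and put `w = (I - pe')v`, so that `e'w = 0`
and `(R + ic)(R - ic)w = R²w - tw = tα p` with `α = e'v`.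

Writing `R + γ = (s + γ)I - N`, the triangle inequality row by row, summed against the column
sums `s - (e'R)_j` of `N`, gives for every complex `x`
`(|s + γ| - s)‖x‖₁ + Σ_j (e'R)_j |x_j| ≤ ‖(R + γ)x‖₁`, and `|s ± ic| > s`.
For `x = (R - ic)w` the right side is `|tα|`, while summing the entries of `(R + ic)x = tα p`
gives `Σ_j (e'R)_j x_j = tα - ic (e'R)w`, whose real part is `tα`; as `e'R ≥ 0`, this
forces `x = 0`.
Then `(R - ic)w = 0` forces `w = 0` in the same way, and `tv = R²w = 0`.
-/

open Matrix Complex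

section

variable {ι : Type*} [Fintype ι]

theorem exists_mulVec_eq_smul_of_mem_spectrum {𝕜 : Type*} [Field 𝕜] [DecidableEq ι]
    {A : Matrix ι ι 𝕜} {t : 𝕜} (ht : t ∈ spectrum 𝕜 A) : ∃ v ≠ 0, A *ᵥ v = t • v := by
  rw [← spectrum_toLin', ← Module.End.hasEigenvalue_iff_mem_spectrum] at ht
  obtain ⟨v, hv⟩ := ht.exists_hasEigenvector
  exact ⟨v, hv.2, by simpa using hv.apply_eq_smul⟩

theorem sum_mulVec_eq_sum_colSum_mul {α : Type*} [CommSemiring α] (A : Matrix ι ι α)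
    (x : ι → α) : ∑ i, (A *ᵥ x) i = ∑ j, (∑ i, A i j) * x j := by
  simp only [mulVec, dotProduct, Finset.sum_mul]
  exact Finset.sum_comm

theorem map_ofReal_mulVec (A : Matrix ι ι ℝ) (v : ι → ℝ) :
    A.map ofReal *ᵥ (fun i => (v i : ℂ)) = fun i => ((A *ᵥ v) i : ℂ) := by
  ext i
  simp [mulVec, dotProduct]

theorem lt_norm_add_mul_I (s : ℝ) {c : ℝ} (hc : c ≠ 0) : s < ‖(s : ℂ) + c * I‖ := by
  rw [norm_add_mul_I]
  calc s ≤ |s| := le_abs_self s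
    _ = √(s ^ 2) := (Real.sqrt_sq_eq_abs s).symm
    _ < √(s ^ 2 + c ^ 2) := Real.sqrt_lt_sqrt (sq_nonneg s) (by simp [sq_pos_of_ne_zero hc])

theorem norm_mul_sum_norm_le {N : Matrix ι ι ℝ} (hN : ∀ i j, 0 ≤ N i j) (z : ℂ) (x : ι → ℂ) :
    ‖z‖ * ∑ i, ‖x i‖ ≤ ∑ j, (∑ i, N i j) * ‖x j‖ + ∑ i, ‖(z • x - N.map ofReal *ᵥ x) i‖ := by
  set b := z • x - N.map ofReal *ᵥ x
  have hrow : ∀ i, ‖z‖ * ‖x i‖ ≤ ∑ j, N i j * ‖x j‖ + ‖b i‖ := fun i =>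
    calc ‖z‖ * ‖x i‖ = ‖(N.map ofReal *ᵥ x) i + b i‖ := by simp [b]
      _ ≤ ‖(N.map ofReal *ᵥ x) i‖ + ‖b i‖ := norm_add_le _ _
      _ ≤ ∑ j, ‖(N i j : ℂ) * x j‖ + ‖b i‖ := by gcongr; exact norm_sum_le _ _
      _ = ∑ j, N i j * ‖x j‖ + ‖b i‖ := by simp [abs_of_nonneg (hN _ _)]
  calc ‖z‖ * ∑ i, ‖x i‖ ≤ ∑ i, (∑ j, N i j * ‖x j‖ + ‖b i‖) := by
        rw [Finset.mul_sum]
        exact Finset.sum_le_sum fun i _ => hrow i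
    _ = _ := by
        rw [Finset.sum_add_distrib, Finset.sum_comm]
        simp only [Finset.sum_mul]

variable [DecidableEq ι] {R N : Matrix ι ι ℝ} {s : ℝ}

theorem le_sum_norm_mulVec_add_smul (hN : ∀ i j, 0 ≤ N i j) (hR : R = s • 1 - N) (γ : ℂ)
    (x : ι → ℂ) :
    (‖(s : ℂ) + γ‖ - s) * ∑ i, ‖x i‖ + ∑ j, (∑ i, R i j) * ‖x j‖ ≤
      ∑ i, ‖(R.map ofReal *ᵥ x + γ • x) i‖ := by
  have hcol : ∀ j, ∑ i, N i j = s - ∑ i, R i j := fun j => by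
    simp [hR, Finset.sum_sub_distrib, one_apply]
  have hRx : R.map ofReal *ᵥ x + γ • x = ((s : ℂ) + γ) • x - N.map ofReal *ᵥ x := by
    subst hR
    ext i
    simp [mulVec, dotProduct, one_apply, sub_mul, Finset.sum_sub_distrib, apply_ite ofReal,
      ite_mul]
    ring
  have h := norm_mul_sum_norm_le hN ((s : ℂ) + γ) x
  simp only [hcol, sub_mul, Finset.sum_sub_distrib, ← Finset.mul_sum, ← hRx] at h
  linarith

theorem eq_zero_of_sum_norm_mulVec_add_smul_le (hN : ∀ i j, 0 ≤ N i j) (hR : R = s • 1 - N)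
    {γ : ℂ} (hγ : s < ‖(s : ℂ) + γ‖) {x : ι → ℂ}
    (hx : ∑ i, ‖(R.map ofReal *ᵥ x + γ • x) i‖ ≤ ∑ j, (∑ i, R i j) * ‖x j‖) : x = 0 := by
  have hest := le_sum_norm_mulVec_add_smul hN hR γ x
  have hsum : ∑ i, ‖x i‖ = 0 :=
    le_antisymm (nonpos_of_mul_nonpos_right (by linarith) (sub_pos.mpr hγ))
      (Finset.sum_nonneg fun i _ => norm_nonneg (x i))
  have hnorm := (Fintype.sum_eq_zero_iff_of_nonneg fun i => norm_nonneg (x i)).mp hsum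
  funext i
  exact norm_eq_zero.mp (congrFun hnorm i)

theorem eq_zero_of_mulVec_add_mul_I_smul_eq {c β : ℝ} {p : ι → ℝ} {x : ι → ℂ}
    (hN : ∀ i j, 0 ≤ N i j) (hR : R = s • 1 - N) (heR : ∀ j, 0 ≤ ∑ i, R i j) (hc : c ≠ 0)
    (hp : ∀ i, 0 ≤ p i) (hx : R.map ofReal *ᵥ x + (c * I) • x = fun i => ((β * p i : ℝ) : ℂ))
    (hsumx : (∑ i, x i).im = 0) : x = 0 := by
  refine eq_zero_of_sum_norm_mulVec_add_smul_le hN hR (lt_norm_add_mul_I s hc) ?_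
  have hsum : ∑ j, ((∑ i, R i j : ℝ) : ℂ) * x j = β * ∑ i, p i - c * I * ∑ i, x i :=
    calc ∑ j, ((∑ i, R i j : ℝ) : ℂ) * x j = ∑ i, (R.map ofReal *ᵥ x) i := by
          simp [sum_mulVec_eq_sum_colSum_mul]
      _ = ∑ i, (R.map ofReal *ᵥ x + (c * I) • x) i - c * I * ∑ i, x i := by
          simp [Finset.sum_add_distrib, Finset.mul_sum]
      _ = _ := by
          rw [hx]
          push_cast
          simp [Finset.mul_sum]
  calc ∑ i, ‖(R.map ofReal *ᵥ x + (c * I) • x) i‖ = |β| * ∑ i, p i := by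
        simp only [hx, norm_real, Real.norm_eq_abs, abs_mul, abs_of_nonneg (hp _), Finset.mul_sum]
    _ = |(∑ j, ((∑ i, R i j : ℝ) : ℂ) * x j).re| := by
        rw [hsum]
        simp [hsumx, abs_mul, abs_of_nonneg (Finset.sum_nonneg fun i _ => hp i)]
    _ ≤ ‖∑ j, ((∑ i, R i j : ℝ) : ℂ) * x j‖ := abs_re_le_norm _
    _ ≤ ∑ j, (∑ i, R i j) * ‖x j‖ := by
        refine (norm_sum_le _ _).trans_eq ?_
        simp only [norm_mul, norm_real, Real.norm_eq_abs, abs_of_nonneg (heR _)]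

theorem eq_zero_of_sq_mulVec_sub_smul_eq_smul {t β : ℝ} {p w : ι → ℝ} (hN : ∀ i j, 0 ≤ N i j)
    (hR : R = s • 1 - N) (heR : ∀ j, 0 ≤ ∑ i, R i j) (ht : t < 0) (hp : ∀ i, 0 ≤ p i)
    (hw : ∑ i, w i = 0) (h : R ^ 2 *ᵥ w - t • w = β • p) : w = 0 := by
  set c := √(-t)
  have hc : c ≠ 0 := (Real.sqrt_pos.mpr (neg_pos.mpr ht)).ne'
  have hc2 : ((c : ℂ) * I) ^ 2 = t := by
    simp only [mul_pow, I_sq, ← ofReal_pow, Real.sq_sqrt (neg_nonneg.mpr ht.le), c]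
    push_cast
    ring
  set W : ι → ℂ := fun i => w i
  set x := R.map ofReal *ᵥ W - (c * I) • W
  have hx : R.map ofReal *ᵥ x + (c * I) • x = fun i => ((β * p i : ℝ) : ℂ) :=
    calc R.map ofReal *ᵥ x + (c * I) • x
        = R.map ofReal *ᵥ (R.map ofReal *ᵥ W) - ((c : ℂ) * I) ^ 2 • W := by
          simp only [x, mulVec_sub, mulVec_smul]
          module
      _ = fun i => (((R ^ 2 *ᵥ w - t • w : ι → ℝ) i : ℝ) : ℂ) := by
          ext i
          simp [W, hc2, map_ofReal_mulVec, sq, ← mulVec_mulVec]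
      _ = _ := by rw [h]; rfl
  have hsumx : (∑ i, x i).im = 0 := by
    simp [x, W, Finset.sum_sub_distrib, map_ofReal_mulVec, ← ofReal_sum, ← Finset.mul_sum, hw]
  have hx0 : x = 0 := eq_zero_of_mulVec_add_mul_I_smul_eq hN hR heR hc hp hx hsumx
  have hW : W = 0 := by
    have hW' : R.map ofReal *ᵥ W + (-(c * I)) • W = 0 := by rwa [neg_smul, ← sub_eq_add_neg]
    refine eq_zero_of_sum_norm_mulVec_add_smul_le hN hR (γ := -(c * I)) ?_ ?_
    · simpa using lt_norm_add_mul_I s (neg_ne_zero.mpr hc)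
    · rw [hW']
      simpa using Finset.sum_nonneg fun j _ => mul_nonneg (heR j) (norm_nonneg (W j))
  funext i
  simpa [W] using congrFun hW i

end

theorem no_real_negative_eigenvalue_general {K : ℕ} (R N : Matrix (Fin K) (Fin K) ℝ) (s : ℝ)
    (hN : ∀ i j, 0 ≤ N i j)
    (hR : R = s • (1 : Matrix (Fin K) (Fin K) ℝ) - N)
    (heR : ∀ j, 0 ≤ ∑ i, R i j)
    (p : Fin K → ℝ) (hp : ∀ i, 0 ≤ p i) (hp1 : ∑ i, p i = 1) :
    ∀ t : ℝ, t < 0 →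
      t ∉ spectrum ℝ (R ^ 2 * ((1 - Matrix.vecMulVec p (fun _ => (1:ℝ))) : Matrix (Fin K) (Fin K) ℝ)) := by
  intro t ht hmem
  obtain ⟨v, hv0, hv⟩ := exists_mulVec_eq_smul_of_mem_spectrum hmem
  set α := ∑ i, v i
  have hproj : (1 - vecMulVec p fun _ => (1 : ℝ)) *ᵥ v = v - α • p := by
    rw [sub_mulVec, one_mulVec]
    ext i
    simp [mulVec, dotProduct, vecMulVec_apply, α, Finset.mul_sum, mul_comm]
  have hw : v - α • p = 0 := by
    refine eq_zero_of_sq_mulVec_sub_smul_eq_smul hN hR heR ht hp (β := t * α) ?_ ?_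
    · simp [Finset.sum_sub_distrib, ← Finset.mul_sum, hp1, α]
    · rw [← hproj, mulVec_mulVec, hv, hproj]
      module
  apply hv0
  have htv : t • v = 0 := by rw [← hv, ← mulVec_mulVec, hproj, hw, mulVec_zero]
  exact (smul_eq_zero.mp htv).resolve_left ht.ne

/-- Let `R = sI − N` be a nonsingular M-matrix with `e'R ≥ 0'` entrywise, and let `p` be a
nonnegative probability vector. Then `R²(I − pe')` has no real negative eigenvalue. -/
theorem no_real_negative_eigenvalue {K : ℕ} (R N : Matrix (Fin K) (Fin K) ℝ) (s : ℝ)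
    (hs : 0 < s) (hN : ∀ i j, 0 ≤ N i j)
    (hR : R = s • (1 : Matrix (Fin K) (Fin K) ℝ) - N)
    (hρ : ∀ μ ∈ spectrum ℂ (N.map (Complex.ofReal)), ‖μ‖ < s)
    (heR : ∀ j, 0 ≤ ∑ i, R i j)
    (p : Fin K → ℝ) (hp : ∀ i, 0 ≤ p i) (hp1 : ∑ i, p i = 1) :
    ∀ t : ℝ, t < 0 →
      t ∉ spectrum ℝ (R ^ 2 * ((1 - Matrix.vecMulVec p (fun _ => (1:ℝ))) : Matrix (Fin K) (Fin K) ℝ)) :=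
  no_real_negative_eigenvalue_general R N s hN hR heR p hp hp1
end

section
/- Let R be a nonsingular M-matrix with e'R ≥ 0' entrywise and p a nonnegative probability vector. Then the matrix (I − pe')R is an M-matrix; in particular, all its eigenvalues have nonnegative real part. -/
/-!
Writing `c` for the vector of column sums of `R`, one has `(I - p eᵀ) R = s I - N'` with
`N' = N + p cᵀ`. Since `c ≥ 0` and `p ≥ 0`, `N'` is nonnegative, and because `eᵀ p = 1` every
column of `N'` sums to exactly `s`. The maximum column sum bounds the spectral radius (it is the
`ℓ∞` operator norm of the transpose), so `ρ(N') ≤ s`; an eigenvalue `μ = s - ν` of `s I - N'`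
then has `Re μ ≥ s - |ν| ≥ 0`.
-/

open Matrix

theorem spectrum.re_nonneg_of_mem_algebraMap_sub {A : Type*} [Ring A] [Algebra ℂ A] {b : A}
    {s : ℝ} (hb : ∀ ν ∈ spectrum ℂ b, ‖ν‖ ≤ s) {μ : ℂ}
    (hμ : μ ∈ spectrum ℂ (algebraMap ℂ A s - b)) : 0 ≤ μ.re := by
  rw [← spectrum.singleton_sub_eq] at hμ
  obtain ⟨_, rfl, ν, hν, rfl⟩ := hμ
  have := (Complex.re_le_norm ν).trans (hb ν hν)
  simp only [Complex.sub_re, Complex.ofReal_re]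
  linarith

theorem Matrix.norm_le_of_mem_spectrum_of_sum_col_le {n : Type*} [Fintype n] [DecidableEq n]
    {A : Matrix n n ℝ} {s : ℝ} (hA : ∀ i j, 0 ≤ A i j) (hcol : ∀ j, ∑ i, A i j ≤ s) {μ : ℂ}
    (hμ : μ ∈ spectrum ℂ (A.map Complex.ofReal)) : ‖μ‖ ≤ s := by
  rw [mem_spectrum_iff_isRoot_charpoly, ← charpoly_transpose,
    ← mem_spectrum_iff_isRoot_charpoly] at hμ
  let := Matrix.linftyOpNormedRing (n := n) (α := ℂ)
  let := Matrix.linftyOpNormedAlgebra (n := n) (R := ℂ) (α := ℂ)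
  rcases isEmpty_or_nonempty n with hn | hn
  · simp [spectrum.of_subsingleton] at hμ
  obtain ⟨j₀⟩ := id hn
  have hs : 0 ≤ s := (Finset.sum_nonneg fun i _ => hA i j₀).trans (hcol j₀)
  calc ‖μ‖ ≤ ‖(A.map Complex.ofReal)ᵀ‖ := spectrum.norm_le_norm_of_mem hμ
    _ ≤ s := by
      rw [linfty_opNorm_def, ← Real.le_toNNReal_iff_coe_le hs]
      refine Finset.sup_le fun j _ => ?_
      rw [Real.le_toNNReal_iff_coe_le hs]
      push_cast
      simpa [Real.norm_of_nonneg (hA _ j)] using hcol j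

theorem Matrix.one_sub_vecMulVec_one_mul {n α : Type*} [Fintype n] [DecidableEq n] [Ring α]
    (p : n → α) (R : Matrix n n α) :
    (1 - vecMulVec p (fun _ => (1 : α))) * R = R - vecMulVec p (fun j => ∑ i, R i j) := by
  rw [sub_mul, one_mul, vecMulVec_mul]
  congr 2
  ext j
  simp [vecMul, dotProduct]

theorem Matrix.map_ofReal_smul_one_sub_s5 {n : Type*} [Fintype n] [DecidableEq n]
    (s : ℝ) (N : Matrix n n ℝ) :
    (s • (1 : Matrix n n ℝ) - N).map Complex.ofReal
      = algebraMap ℂ (Matrix n n ℂ) s - N.map Complex.ofReal := by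
  rw [Matrix.map_sub, Matrix.map_smul, Matrix.map_one] <;>
    simp [Algebra.algebraMap_eq_smul_one]

theorem IpeR_is_Mmatrix_general {K : ℕ} (R N : Matrix (Fin K) (Fin K) ℝ) (s : ℝ)
    (hs : 0 < s) (hN : ∀ i j, 0 ≤ N i j)
    (hR : R = s • (1 : Matrix (Fin K) (Fin K) ℝ) - N)
    (heR : ∀ j, 0 ≤ ∑ i, R i j)
    (p : Fin K → ℝ) (hp : ∀ i, 0 ≤ p i) (hp1 : ∑ i, p i = 1) :
    (∃ s' : ℝ, 0 < s' ∧ ∃ N' : Matrix (Fin K) (Fin K) ℝ,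
        (∀ i j, 0 ≤ N' i j) ∧
        (∀ μ ∈ spectrum ℂ (N'.map (Complex.ofReal)), ‖μ‖ ≤ s') ∧
        (1 - Matrix.vecMulVec p (fun _ => (1:ℝ))) * R
          = s' • (1 : Matrix (Fin K) (Fin K) ℝ) - N') ∧
    ∀ μ ∈ spectrum ℂ
        (((1 - Matrix.vecMulVec p (fun _ => (1:ℝ))) * R).map (Complex.ofReal)),
      0 ≤ μ.re := by
  set c : Fin K → ℝ := fun j => ∑ i, R i j
  set N' := N + vecMulVec p c
  have hN' : ∀ i j, 0 ≤ N' i j := fun i j => add_nonneg (hN i j) (mul_nonneg (hp i) (heR j))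
  have hdecomp : (1 - vecMulVec p (fun _ => (1 : ℝ))) * R = s • 1 - N' := by
    rw [one_sub_vecMulVec_one_mul]
    change R - vecMulVec p c = s • 1 - N'
    rw [hR, sub_sub]
  have hcol : ∀ j, ∑ i, N' i j = s := by
    intro j
    have hc : c j = s - ∑ i, N i j := by
      simp [c, hR, Finset.sum_sub_distrib, Matrix.one_apply]
    calc ∑ i, N' i j = ∑ i, N i j + (∑ i, p i) * c j := by
          simp only [N', Matrix.add_apply, vecMulVec_apply, Finset.sum_add_distrib, Finset.sum_mul]
      _ = s := by rw [hp1, hc]; ring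
  have hspec : ∀ μ ∈ spectrum ℂ (N'.map Complex.ofReal), ‖μ‖ ≤ s := fun μ hμ =>
    norm_le_of_mem_spectrum_of_sum_col_le hN' (fun j => (hcol j).le) hμ
  refine ⟨⟨s, hs, N', hN', hspec, hdecomp⟩, fun μ hμ => ?_⟩
  rw [hdecomp, map_ofReal_smul_one_sub_s5] at hμ
  exact spectrum.re_nonneg_of_mem_algebraMap_sub hspec hμ

/-- Let `R` be a nonsingular M-matrix with `e'R ≥ 0'` entrywise and `p` a nonnegative
probability vector. Then `(I − pe')R` is an M-matrix (i.e. of the form `s'I − N'` with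
`N'` nonnegative and `ρ(N') ≤ s'`); in particular, all its eigenvalues have nonnegative
real part. -/
theorem IpeR_is_Mmatrix {K : ℕ} (R N : Matrix (Fin K) (Fin K) ℝ) (s : ℝ)
    (hs : 0 < s) (hN : ∀ i j, 0 ≤ N i j)
    (hR : R = s • (1 : Matrix (Fin K) (Fin K) ℝ) - N)
    (hρ : ∀ μ ∈ spectrum ℂ (N.map (Complex.ofReal)), ‖μ‖ < s)
    (heR : ∀ j, 0 ≤ ∑ i, R i j)
    (p : Fin K → ℝ) (hp : ∀ i, 0 ≤ p i) (hp1 : ∑ i, p i = 1) :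
    (∃ s' : ℝ, 0 < s' ∧ ∃ N' : Matrix (Fin K) (Fin K) ℝ,
        (∀ i j, 0 ≤ N' i j) ∧
        (∀ μ ∈ spectrum ℂ (N'.map (Complex.ofReal)), ‖μ‖ ≤ s') ∧
        (1 - Matrix.vecMulVec p (fun _ => (1:ℝ))) * R
          = s' • (1 : Matrix (Fin K) (Fin K) ℝ) - N') ∧
    ∀ μ ∈ spectrum ℂ
        (((1 - Matrix.vecMulVec p (fun _ => (1:ℝ))) * R).map (Complex.ofReal)),
      0 ≤ μ.re :=
  IpeR_is_Mmatrix_general R N s hs hN hR heR p hp hp1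
end

section
/- Let Q be symmetric positive definite with Q(−R(I−pe')) + (−(I−ep')R')Q ⪯ 0, where R(I−pe') has a simple zero eigenvalue with left eigenvector e' and R is invertible. If the symmetric PSD matrix S = −[Q(−R(I−pe')) + (−(I−ep')R')Q] satisfies p'Sp = 0, then Sp = 0, i.e., p'[Q(−R(I−pe')) + (−(I−ep')R')Q] = 0'. Consequently p'Q = b·e'R^{-1} for some nonzero scalar b. -/
open Matrix

/-!
Since `e'p = 1`, the projector `M = I − pe'` kills `p`, so `S = QRM + MᵀRᵀQ` satisfies
`p'S = (p'QR)M`. As `S ⪰ 0`, `p'Sp = 0` forces `Sp = 0`, hence `p'S = 0` by symmetry, and so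
`p'QR` is a left null vector of `M`, i.e. a constant vector `b e'`. Then `p'Q = b e'R⁻¹`, and
`b ≠ 0` because `Q ≻ 0` and `p ≠ 0`.
-/

namespace Matrix

variable {n α : Type*} [Fintype n]

theorem one_sub_vecMulVec_mulVec_self [CommRing α] [DecidableEq n] {p q : n → α}
    (h : q ⬝ᵥ p = 1) : (1 - vecMulVec p q) *ᵥ p = 0 := by
  simp [sub_mulVec, vecMulVec_mulVec, h]

theorem vecMul_mul_neg_add_neg_transpose_mul [CommRing α] {Q R M : Matrix n n α} {p : n → α}
    (hMp : M *ᵥ p = 0) :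
    p ᵥ* (Q * -(R * M) + -(Mᵀ * Rᵀ) * Q) = -((p ᵥ* (Q * R)) ᵥ* M) := by
  have hpMt : p ᵥ* Mᵀ = 0 := by rw [vecMul_transpose, hMp]
  simp only [vecMul_add, vecMul_neg, Matrix.mul_neg, Matrix.neg_mul, ← vecMul_vecMul, hpMt,
    zero_vecMul, neg_zero, add_zero, ← Matrix.mul_assoc]

open scoped ComplexOrder in
theorem PosSemidef.star_vecMul_eq_zero {𝕜 : Type*} [RCLike 𝕜] {S : Matrix n n 𝕜}
    (hS : S.PosSemidef) {x : n → 𝕜} (h : star x ⬝ᵥ S *ᵥ x = 0) : star x ᵥ* S = 0 := by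
  rw [← hS.isHermitian.eq, ← star_mulVec, (hS.dotProduct_mulVec_zero_iff x).mp h,
    star_zero]

theorem eq_vecMul_nonsing_inv_of_vecMul_eq [CommRing α] [DecidableEq n] {R : Matrix n n α}
    (hR : IsUnit R.det) {v w : n → α} (h : v ᵥ* R = w) : v = w ᵥ* R⁻¹ := by
  rw [← h, vecMul_vecMul, mul_nonsing_inv R hR, vecMul_one]

end Matrix

theorem left_kernel_pQ_general {K : ℕ} (R Q : Matrix (Fin K) (Fin K) ℝ)
    (p : Fin K → ℝ) (hp1 : ∑ i, p i = 1) (hRinv : IsUnit R.det)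
    (hQ : Q.PosDef)
    (hS : (-(Q * (-(R * ((1:Matrix (Fin K) (Fin K) ℝ)
            - Matrix.vecMulVec p (fun _ => (1:ℝ)))))
          + (-(((1:Matrix (Fin K) (Fin K) ℝ)
            - Matrix.vecMulVec (fun _ => (1:ℝ)) p) * Rᵀ)) * Q)).PosSemidef)
    (hsimple : ∀ v : Fin K → ℝ,
      Matrix.vecMul v ((1:Matrix (Fin K) (Fin K) ℝ)
        - Matrix.vecMulVec p (fun _ => (1:ℝ))) = 0 →
      ∃ c : ℝ, v = fun _ => c)
    (hpSp : dotProduct p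
      ((-(Q * (-(R * ((1:Matrix (Fin K) (Fin K) ℝ)
            - Matrix.vecMulVec p (fun _ => (1:ℝ)))))
          + (-(((1:Matrix (Fin K) (Fin K) ℝ)
            - Matrix.vecMulVec (fun _ => (1:ℝ)) p) * Rᵀ)) * Q)) *ᵥ p) = 0) :
    Matrix.vecMul p (Q * (-(R * ((1:Matrix (Fin K) (Fin K) ℝ)
          - Matrix.vecMulVec p (fun _ => (1:ℝ)))))
        + (-(((1:Matrix (Fin K) (Fin K) ℝ)
          - Matrix.vecMulVec (fun _ => (1:ℝ)) p) * Rᵀ)) * Q) = 0 ∧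
    ∃ b : ℝ, b ≠ 0 ∧
      Matrix.vecMul p Q = b • Matrix.vecMul (fun _ => (1:ℝ)) R⁻¹ := by
  set M := (1 : Matrix (Fin K) (Fin K) ℝ) - vecMulVec p (fun _ => 1)
  have hMt : (1 : Matrix (Fin K) (Fin K) ℝ) - vecMulVec (fun _ => 1) p = Mᵀ := by
    simp [M, transpose_sub]
  rw [hMt] at hS hpSp ⊢
  have hpS : p ᵥ* (Q * -(R * M) + -(Mᵀ * Rᵀ) * Q) = 0 := by
    have h := hS.star_vecMul_eq_zero (x := p) (by rwa [star_trivial])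
    rwa [star_trivial, vecMul_neg, neg_eq_zero] at h
  refine ⟨hpS, ?_⟩
  have hMp : M *ᵥ p = 0 :=
    one_sub_vecMulVec_mulVec_self (by simpa [dotProduct, eq_comm] using hp1)
  rw [vecMul_mul_neg_add_neg_transpose_mul hMp, neg_eq_zero] at hpS
  obtain ⟨b, hb⟩ := hsimple _ hpS
  have hpQ : p ᵥ* Q = b • ((fun _ => 1) ᵥ* R⁻¹) := by
    have hconst : (fun _ => b) = b • fun _ : Fin K => (1 : ℝ) := by ext; simp
    rw [← smul_vecMul, ← hconst]
    exact eq_vecMul_nonsing_inv_of_vecMul_eq hRinv (by rw [vecMul_vecMul, hb])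
  refine ⟨b, fun hb0 => ?_, hpQ⟩
  have hp0 : p ≠ 0 := by rintro rfl; simp at hp1
  have := hQ.dotProduct_mulVec_pos hp0
  rw [star_trivial, dotProduct_mulVec, hpQ, hb0, zero_smul, zero_dotProduct] at this
  exact lt_irrefl 0 this

/-- Let `R` be invertible, `p` a vector with `e'p = 1`, and `Q` symmetric positive
definite with `S := −[Q(−R(I−pe')) + (−(I−ep')R')Q]` positive semidefinite. Assume the
only left eigenvectors of `I − pe'` for the eigenvalue `0` are the scalar multiples of
`e'`. If `p'Sp = 0` then `p'S = 0'`, i.e. `p'[Q(−R(I−pe')) + (−(I−ep')R')Q] = 0'`;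
consequently `p'Q = b·e'R⁻¹` for some nonzero scalar `b`. -/
theorem left_kernel_pQ {K : ℕ} (R Q : Matrix (Fin K) (Fin K) ℝ)
    (p : Fin K → ℝ) (hp1 : ∑ i, p i = 1) (hRinv : IsUnit R.det)
    (hQsymm : Q.IsSymm) (hQ : Q.PosDef)
    (hS : (-(Q * (-(R * ((1:Matrix (Fin K) (Fin K) ℝ)
            - Matrix.vecMulVec p (fun _ => (1:ℝ)))))
          + (-(((1:Matrix (Fin K) (Fin K) ℝ)
            - Matrix.vecMulVec (fun _ => (1:ℝ)) p) * Rᵀ)) * Q)).PosSemidef)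
    (hsimple : ∀ v : Fin K → ℝ,
      Matrix.vecMul v ((1:Matrix (Fin K) (Fin K) ℝ)
        - Matrix.vecMulVec p (fun _ => (1:ℝ))) = 0 →
      ∃ c : ℝ, v = fun _ => c)
    (hpSp : dotProduct p
      ((-(Q * (-(R * ((1:Matrix (Fin K) (Fin K) ℝ)
            - Matrix.vecMulVec p (fun _ => (1:ℝ)))))
          + (-(((1:Matrix (Fin K) (Fin K) ℝ)
            - Matrix.vecMulVec (fun _ => (1:ℝ)) p) * Rᵀ)) * Q)) *ᵥ p) = 0) :
    Matrix.vecMul p (Q * (-(R * ((1:Matrix (Fin K) (Fin K) ℝ)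
          - Matrix.vecMulVec p (fun _ => (1:ℝ)))))
        + (-(((1:Matrix (Fin K) (Fin K) ℝ)
          - Matrix.vecMulVec (fun _ => (1:ℝ)) p) * Rᵀ)) * Q) = 0 ∧
    ∃ b : ℝ, b ≠ 0 ∧
      Matrix.vecMul p Q = b • Matrix.vecMul (fun _ => (1:ℝ)) R⁻¹ :=
  left_kernel_pQ_general R Q p hp1 hRinv hQ hS hsimple hpSp
end

section
/- Let R be a nonsingular M-matrix with e'R ≥ 0', p a nonnegative probability vector, and α > 0. Then all eigenvalues of −R(I − pe') − α pe' have strictly negative real part. -/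
/-!
Write `R = sI - N` and `z = s + μ`. The matrix `μI + R(I - pe') + αpe'` is the rank-one
perturbation `(zI - N) + ((μ + α)p - (zI - N)p)e'` of `zI - N`, so by the matrix determinant lemma
its determinant is `(μ + α) det(zI - N) e'(zI - N)⁻¹p`. If `Re μ ≥ 0`, then `Re z ≥ s > ρ(N)` and
the Neumann series gives `e'(zI - N)⁻¹p = ∑ cₙ / zⁿ⁺¹` with `cₙ = e'Nⁿp ≥ 0`, `c₀ = 1` and
`cₙ₊₁ ≤ s cₙ`, because the column sums of `N` are at most `s`. Hence `dₙ = cₙ / sⁿ` decreases, and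
`∑ dₙ uⁿ` with `u = s / z` cannot vanish: for `|u| < 1` by the Eneström–Kakeya argument (multiply
by `1 - u` and sum by parts), and at `u = 1` all its terms are positive.
-/

open Matrix
open scoped NNReal ENNReal

theorem hasSum_sub_mul_pow_succ {R : Type*} [CommRing R] [TopologicalSpace R]
    [IsTopologicalRing R] {f : ℕ → R} {x F : R} (h : HasSum (fun n => f n * x ^ n) F) :
    HasSum (fun n => (f n - f (n + 1)) * x ^ (n + 1)) (f 0 - (1 - x) * F) := by
  have hshift : HasSum (fun n => f (n + 1) * x ^ (n + 1)) (F - f 0) := by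
    simpa using (hasSum_nat_add_iff' 1).mpr h
  have hterms : (fun n => (f n - f (n + 1)) * x ^ (n + 1))
      = fun n => f n * x ^ n * x - f (n + 1) * x ^ (n + 1) := by
    funext n
    ring
  rw [hterms, show f 0 - (1 - x) * F = F * x - (F - f 0) by ring]
  exact (h.mul_right x).sub hshift

section Antitone

variable {𝕜 : Type*} [RCLike 𝕜] {d : ℕ → ℝ}

theorem Antitone.summable_mul_pow (hd : Antitone d) (hd_nonneg : ∀ n, 0 ≤ d n) {x : 𝕜}
    (hx : ‖x‖ < 1) : Summable fun n => (d n : 𝕜) * x ^ n :=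
  Summable.of_norm_bounded ((summable_geometric_of_lt_one (norm_nonneg _) hx).mul_left (d 0))
    fun n => by
      rw [norm_mul, norm_pow, RCLike.norm_ofReal, abs_of_nonneg (hd_nonneg n)]
      gcongr
      exact hd n.zero_le

theorem tsum_mul_pow_ne_zero_of_antitone (hd : Antitone d) (hd_nonneg : ∀ n, 0 ≤ d n)
    (hd0 : 0 < d 0) {u : 𝕜} (hu : ‖u‖ < 1) : ∑' n, (d n : 𝕜) * u ^ n ≠ 0 := by
  set q := ‖u‖
  have hsumq : Summable fun n => d n * q ^ n := by
    simpa using hd.summable_mul_pow hd_nonneg (x := q) (by simpa [q] using hu)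
  have hFq : d 0 ≤ ∑' n, d n * q ^ n := by
    simpa using hsumq.le_tsum 0 fun n _ => mul_nonneg (hd_nonneg n) (by positivity)
  have hGq := hasSum_sub_mul_pow_succ hsumq.hasSum
  have hGu := hasSum_sub_mul_pow_succ (hd.summable_mul_pow hd_nonneg hu).hasSum
  intro hF
  rw [hF, mul_zero, sub_zero] at hGu
  -- the coefficients `d n - d (n + 1)` are nonnegative, so the series at `q = ‖u‖` dominates
  have hbound : ‖((d 0 : ℝ) : 𝕜)‖ ≤ d 0 - (1 - q) * ∑' n, d n * q ^ n :=
    hGu.norm_le_of_bounded hGq fun n => by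
      rw [norm_mul, norm_pow, ← RCLike.ofReal_sub, RCLike.norm_ofReal,
        abs_of_nonneg (sub_nonneg.mpr (hd n.le_succ))]
  rw [RCLike.norm_ofReal, abs_of_pos hd0] at hbound
  nlinarith [norm_nonneg u]

end Antitone

theorem hasSum_inv_pow_mul_ne_zero {c : ℕ → ℝ} {s : ℝ} (hs : 0 < s) (hc : ∀ n, 0 ≤ c n)
    (hc0 : 0 < c 0) (hcs : ∀ n, c (n + 1) ≤ s * c n) {z : ℂ} (hz : s ≤ z.re) {S : ℂ}
    (hS : HasSum (fun n => z⁻¹ ^ (n + 1) * c n) S) : S ≠ 0 := by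
  by_cases hzs : z = s
  · subst hzs
    have hre : HasSum (fun n => s⁻¹ ^ (n + 1) * c n) S.re := by
      simpa [← Complex.ofReal_inv, ← Complex.ofReal_pow] using Complex.hasSum_re hS
    have hpos : 0 < S.re := (mul_pos (inv_pos.mpr hs) hc0).trans_le <|
      by simpa using le_hasSum hre 0 fun n _ => mul_nonneg (by positivity) (hc n)
    exact fun h => by simp [h] at hpos
  have hz0 : z ≠ 0 := by rintro rfl; simp at hz; linarith
  have hsz : s < ‖z‖ := by
    refine (hz.trans (Complex.re_le_norm z)).lt_of_ne fun h => hzs ?_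
    have hre : z.re = s := le_antisymm (h ▸ Complex.re_le_norm z) hz
    have him : z.im = 0 := Complex.abs_re_eq_norm.mp (by rw [hre, ← h, abs_of_pos hs])
    exact Complex.ext (by simpa using hre) (by simpa using him)
  set d : ℕ → ℝ := fun n => c n / s ^ n
  have hd : Antitone d := antitone_nat_of_succ_le fun n => by
    simp only [d, pow_succ]
    rw [div_le_div_iff₀ (by positivity) (by positivity)]
    nlinarith [hcs n, pow_pos hs n]
  have hu : ‖(s : ℂ) * z⁻¹‖ < 1 := by
    rw [norm_mul, norm_inv, Complex.norm_real, Real.norm_of_nonneg hs.le,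
      mul_inv_lt_iff₀ (hs.trans hsz)]
    simpa using hsz
  have hterm : (fun n => z⁻¹ ^ (n + 1) * c n)
      = fun n => z⁻¹ * ((d n : ℂ) * (s * z⁻¹) ^ n) := by
    funext n
    have hs' : (s : ℂ) ≠ 0 := by exact_mod_cast hs.ne'
    simp only [d]
    push_cast
    rw [mul_pow, pow_succ']
    field_simp
  rw [← hS.tsum_eq, hterm, tsum_mul_left]
  exact mul_ne_zero (inv_ne_zero hz0) (tsum_mul_pow_ne_zero_of_antitone hd
    (fun n => div_nonneg (hc n) (by positivity)) (by simpa [d] using hc0) hu)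

theorem spectrum.hasSum_resolvent {A : Type*} [NormedRing A] [NormedAlgebra ℂ A]
    [CompleteSpace A] (a : A) {z : ℂ} (hz : spectralRadius ℂ a < ‖z‖₊) :
    HasSum (fun n => z⁻¹ ^ (n + 1) • a ^ n) (resolvent a z) := by
  have hz0 : z ≠ 0 := by rintro rfl; simp at hz
  have hw : ((‖z⁻¹‖₊ : ℝ≥0) : ℝ≥0∞) < (spectralRadius ℂ a)⁻¹ := by
    rwa [nnnorm_inv, ENNReal.coe_inv (nnnorm_ne_zero_iff.mpr hz0), ENNReal.inv_lt_inv]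
  obtain ⟨r, hwr, hr⟩ := ENNReal.lt_iff_exists_nnreal_btwn.mp hw
  -- `(1 - w • a)⁻¹` is analytic on the disc of radius `ρ(a)⁻¹`, so its Taylor series converges
  -- on that whole disc, not only on the disc of radius `‖a‖⁻¹`
  have hseries := (hasFPowerSeriesOnBall_inverse_one_sub_smul ℂ a).exchange_radius
    ((spectrum.differentiableOn_inverse_one_sub_smul hr).hasFPowerSeriesOnBall
      (ENNReal.coe_lt_coe.mp hwr).pos)
  have hsum : HasSum (fun n => z⁻¹ ^ n • a ^ n) (Ring.inverse (1 - z⁻¹ • a)) := by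
    simpa using hseries.hasSum (y := z⁻¹) (by simpa [Metric.eball, edist_zero_right] using hwr)
  have hres : resolvent a z = z⁻¹ • Ring.inverse (1 - z⁻¹ • a) := by
    have h := spectrum.units_smul_resolvent_self (r := Units.mk0 z hz0) (a := a)
    simp only [Units.smul_def, Units.val_mk0, Units.val_inv_eq_inv_val, resolvent, map_one] at h
    rw [← h, smul_smul, inv_mul_cancel₀ hz0, one_smul, resolvent]
  rw [hres]
  simpa [pow_succ', mul_smul] using hsum.const_smul z⁻¹

namespace Matrix

theorem hasSum_sum_mulVec {m n α : Type*} [Fintype m] [Fintype n]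
    [NonUnitalNonAssocSemiring α] [TopologicalSpace α] [IsTopologicalSemiring α]
    {f : ℕ → Matrix m n α} {X : Matrix m n α} (h : HasSum f X) (p : n → α) :
    HasSum (fun k => ∑ i, (f k *ᵥ p) i) (∑ i, (X *ᵥ p) i) :=
  hasSum_sum fun i _ => hasSum_sum fun j _ =>
    (Pi.hasSum.mp (Pi.hasSum.mp h i) j).mul_right (p j)

theorem sum_mulVec_le {m n : Type*} [Fintype m] [Fintype n] {N : Matrix m n ℝ} {s : ℝ}
    (hcol : ∀ j, ∑ i, N i j ≤ s) {x : n → ℝ} (hx : 0 ≤ x) :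
    ∑ i, (N *ᵥ x) i ≤ s * ∑ j, x j := by
  calc ∑ i, (N *ᵥ x) i = ∑ j, (∑ i, N i j) * x j := by
        simp only [mulVec, dotProduct, Finset.sum_mul]
        exact Finset.sum_comm
    _ ≤ ∑ j, s * x j := Finset.sum_le_sum fun j _ => mul_le_mul_of_nonneg_right (hcol j) (hx j)
    _ = s * ∑ j, x j := (Finset.mul_sum ..).symm

theorem mulVec_nonneg_of_nonneg {m n : Type*} [Fintype n] {N : Matrix m n ℝ}
    (hN : ∀ i j, 0 ≤ N i j) {x : n → ℝ} (hx : 0 ≤ x) : 0 ≤ N *ᵥ x :=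
  fun i => Finset.sum_nonneg fun j _ => mul_nonneg (hN i j) (hx j)

theorem pow_mulVec_nonneg {n : Type*} [Fintype n] [DecidableEq n] {N : Matrix n n ℝ}
    (hN : ∀ i j, 0 ≤ N i j) {x : n → ℝ} (hx : 0 ≤ x) (k : ℕ) : 0 ≤ N ^ k *ᵥ x := by
  induction k with
  | zero => simpa using hx
  | succ k ih =>
    rw [pow_succ', ← mulVec_mulVec]
    exact mulVec_nonneg_of_nonneg hN ih

open scoped Matrix.Norms.Operator in
theorem sum_resolvent_mulVec_ne_zero {n : Type*} [Fintype n] [DecidableEq n]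
    {N : Matrix n n ℝ} {s : ℝ} (hs : 0 < s) (hN : ∀ i j, 0 ≤ N i j)
    (hcol : ∀ j, ∑ i, N i j ≤ s) (hρ : ∀ μ ∈ spectrum ℂ (N.map Complex.ofReal), ‖μ‖ < s)
    {p : n → ℝ} (hp : 0 ≤ p) (hp0 : 0 < ∑ i, p i) {z : ℂ} (hz : s ≤ z.re) :
    ∑ i, (resolvent (N.map Complex.ofReal) z *ᵥ fun i => (p i : ℂ)) i ≠ 0 := by
  have : Nonempty n := by
    by_contra h
    simp [not_nonempty_iff.mp h] at hp0
  have hρz : spectralRadius ℂ (N.map Complex.ofReal) < ‖z‖₊ :=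
    spectrum.spectralRadius_lt_of_forall_lt _ fun μ hμ => by
      rw [← NNReal.coe_lt_coe, coe_nnnorm, coe_nnnorm]
      exact (hρ μ hμ).trans_le (hz.trans (Complex.re_le_norm z))
  have hneumann := spectrum.hasSum_resolvent _ hρz
  have hsum := hasSum_sum_mulVec hneumann fun i => (p i : ℂ)
  refine hasSum_inv_pow_mul_ne_zero hs (c := fun k => ∑ i, (N ^ k *ᵥ p) i)
    (fun k => Finset.sum_nonneg fun i _ => pow_mulVec_nonneg hN hp k i) ?_ (fun k => ?_) hz
    ?_
  · simpa using hp0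
  · rw [pow_succ', ← mulVec_mulVec]
    exact sum_mulVec_le hcol (pow_mulVec_nonneg hN hp k)
  · have hterm (k : ℕ) :
        ∑ i, ((z⁻¹ ^ (k + 1) • N.map Complex.ofReal ^ k) *ᵥ fun i => (p i : ℂ)) i
          = z⁻¹ ^ (k + 1) * ((∑ i, (N ^ k *ᵥ p) i : ℝ) : ℂ) := by
      have hpow : N.map Complex.ofReal ^ k = (N ^ k).map Complex.ofRealHom :=
        (Matrix.map_pow N Complex.ofRealHom k).symm
      rw [hpow, smul_mulVec]
      simp only [Pi.smul_apply, smul_eq_mul, ← Finset.mul_sum, Complex.ofReal_sum]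
      congr 1
      exact Finset.sum_congr rfl fun i _ => (RingHom.map_mulVec Complex.ofRealHom _ p i).symm
    simpa only [hterm] using hsum

theorem det_add_vecMulVec {n R : Type*} [Fintype n] [DecidableEq n] [CommRing R]
    {A : Matrix n n R} (hA : IsUnit A.det) (u v : n → R) :
    (A + vecMulVec u v).det = A.det * (1 + v ⬝ᵥ A⁻¹ *ᵥ u) := by
  rw [vecMulVec_eq Unit, det_add_replicateCol_mul_replicateRow hA, det_unique (n := Unit)]
  simp [Matrix.mul_apply, mulVec, dotProduct, Finset.sum_mul, Finset.mul_sum]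
  rw [Finset.sum_comm]
  simp only [mul_assoc]

end Matrix

section AbandonmentMatrix

variable {n 𝕜 : Type*} [Fintype n] [DecidableEq n]

def abandonmentMatrix [CommRing 𝕜] (R : Matrix n n 𝕜) (p : n → 𝕜) (α : 𝕜) : Matrix n n 𝕜 :=
  -(R * (1 - vecMulVec p 1)) - α • vecMulVec p 1

theorem abandonmentMatrix_map {𝕜' : Type*} [CommRing 𝕜] [CommRing 𝕜'] (f : 𝕜 →+* 𝕜')
    (R : Matrix n n 𝕜) (p : n → 𝕜) (α : 𝕜) :
    (abandonmentMatrix R p α).map f = abandonmentMatrix (R.map f) (f ∘ p) (f α) := by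
  ext i j
  simp [abandonmentMatrix, Matrix.mul_apply, Matrix.sub_apply, Matrix.one_apply]

theorem det_smul_one_sub_abandonmentMatrix [CommRing 𝕜] {R : Matrix n n 𝕜} {p : n → 𝕜}
    (hp : ∑ i, p i = 1) (α μ : 𝕜) (hR : IsUnit (R + μ • 1).det) :
    (μ • 1 - abandonmentMatrix R p α).det
      = (μ + α) * (R + μ • 1).det * ∑ i, ((R + μ • 1)⁻¹ *ᵥ p) i := by
  set A := R + μ • 1
  have hrankOne :
      μ • 1 - abandonmentMatrix R p α = A + vecMulVec ((μ + α) • p - A *ᵥ p) 1 := by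
    rw [abandonmentMatrix, sub_vecMulVec, smul_vecMulVec, ← mul_vecMulVec]
    simp only [A, Matrix.mul_sub, Matrix.mul_one, Matrix.add_mul, Matrix.smul_mul,
      Matrix.one_mul, add_smul]
    abel
  rw [hrankOne, det_add_vecMulVec hR, one_dotProduct, mulVec_sub, mulVec_smul, mulVec_mulVec,
    nonsing_inv_mul _ hR, one_mulVec]
  simp only [Pi.sub_apply, Pi.smul_apply, smul_eq_mul, Finset.sum_sub_distrib, ← Finset.mul_sum,
    hp]
  ring

theorem sum_inv_mulVec_eq_zero_of_mem_spectrum [Field 𝕜] {R : Matrix n n 𝕜} {p : n → 𝕜}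
    (hp : ∑ i, p i = 1) {α μ : 𝕜} (hμα : μ + α ≠ 0) (hR : IsUnit (R + μ • 1).det)
    (hμ : μ ∈ spectrum 𝕜 (abandonmentMatrix R p α)) :
    ∑ i, ((R + μ • 1)⁻¹ *ᵥ p) i = 0 := by
  rw [spectrum.mem_iff, Algebra.algebraMap_eq_smul_one, isUnit_iff_isUnit_det,
    isUnit_iff_ne_zero, not_not, det_smul_one_sub_abandonmentMatrix hp α μ hR] at hμ
  simpa [hμα, hR.ne_zero] using hμ

end AbandonmentMatrix

/-- Let `R` be a nonsingular M-matrix with `e'R ≥ 0'`, `p` a nonnegative probability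
vector, and `α > 0`. Then all eigenvalues of `−R(I − pe') − αpe'` have strictly negative
real part. -/
theorem abandonment_matrix_hurwitz {K : ℕ} (R N : Matrix (Fin K) (Fin K) ℝ) (s : ℝ)
    (hs : 0 < s) (hN : ∀ i j, 0 ≤ N i j)
    (hR : R = s • (1 : Matrix (Fin K) (Fin K) ℝ) - N)
    (hρ : ∀ μ ∈ spectrum ℂ (N.map (Complex.ofReal)), ‖μ‖ < s)
    (heR : ∀ j, 0 ≤ ∑ i, R i j)
    (p : Fin K → ℝ) (hp : ∀ i, 0 ≤ p i) (hp1 : ∑ i, p i = 1)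
    (α : ℝ) (hα : 0 < α) :
    ∀ μ ∈ spectrum ℂ
      ((-(R * ((1:Matrix (Fin K) (Fin K) ℝ) - Matrix.vecMulVec p (fun _ => (1:ℝ))))
          - α • Matrix.vecMulVec p (fun _ => (1:ℝ))).map (Complex.ofReal)),
      μ.re < 0 := by
  intro μ hμ
  by_contra! hre
  have hcol (j : Fin K) : ∑ i, N i j ≤ s := by
    have := heR j
    simp [hR, Matrix.sub_apply, Finset.sum_sub_distrib, Matrix.one_apply] at this
    linarith
  set z : ℂ := s + μ
  have hz : s ≤ z.re := by simp [z]; linarith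
  have hshift : R.map Complex.ofReal + μ • 1 = algebraMap ℂ _ z - N.map Complex.ofReal := by
    ext i j
    simp [hR, z, Algebra.algebraMap_eq_smul_one, Matrix.one_apply]
    split_ifs <;> push_cast <;> ring
  have hunit : IsUnit (R.map Complex.ofReal + μ • 1).det := by
    rw [hshift, ← isUnit_iff_isUnit_det]
    exact spectrum.notMem_iff.mp fun hzσ => (hz.trans (Complex.re_le_norm z)).not_gt (hρ z hzσ)
  have hμα : μ + α ≠ 0 := fun h => by
    have := congrArg Complex.re h
    simp at this
    linarith
  have hmap : (abandonmentMatrix R p α).map Complex.ofReal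
      = abandonmentMatrix (R.map Complex.ofReal) (fun i => (p i : ℂ)) α :=
    abandonmentMatrix_map Complex.ofRealHom R p α
  have hsum := sum_inv_mulVec_eq_zero_of_mem_spectrum
    (by simpa using congrArg Complex.ofReal hp1) hμα hunit (hmap ▸ hμ)
  rw [hshift, nonsing_inv_eq_ringInverse] at hsum
  exact Matrix.sum_resolvent_mulVec_ne_zero hs hN hcol hρ hp (by rw [hp1]; exact one_pos) hz hsum
end

section
/- For the concrete 3×3 matrix R = [[1,−1,0],[0,1,−1],[0,0,1]], vector p = (0,0,1)', and α = 133, the matrix product R(R(I−pe') + α pe') has eigenvalues −7, 5−√82, and 5+√82; in particular it has a real negative eigenvalue. -/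
open Matrix Polynomial

theorem Matrix.spectrum_eq_of_charpoly_eq_prod {n K : Type*} [Fintype n] [DecidableEq n]
    [Field K] [DecidableEq K] {A : Matrix n n K} {s : Multiset K}
    (h : A.charpoly = (s.map fun a => X - C a).prod) :
    spectrum K A = s.toFinset := by
  ext r
  rw [mem_spectrum_iff_isRoot_charpoly, h, IsRoot, eval_multiset_prod, Multiset.prod_eq_zero_iff]
  simp [sub_eq_zero]

-- The characteristic polynomial is `(X + 7) * (X ^ 2 - 10 * X - 57)`.
theorem charpoly_eq_prod_X_sub_C_eigenvalues :
    (!![0, -3, 0; -131, -130, -133; 132, 132, 133] : Matrix (Fin 3) (Fin 3) ℝ).charpoly =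
      (X - C (-7)) * ((X - C (5 - √82)) * (X - C (5 + √82))) := by
  have hsqrt : C (√82) ^ 2 = (82 : ℝ[X]) := by rw [← C_pow, Real.sq_sqrt (by norm_num)]; rfl
  rw [charpoly, det_fin_three]
  simp [map_ofNat]
  linear_combination (X + 7) * hsqrt

/-- For `R = [[1,−1,0],[0,1,−1],[0,0,1]]`, `p = (0,0,1)'`, `α = 133`, the matrix
`R(R(I−pe') + αpe')` has real spectrum `{−7, 5−√82, 5+√82}`; in particular it has a
real negative eigenvalue. -/
theorem concrete_negative_eigenvalue :
    let R : Matrix (Fin 3) (Fin 3) ℝ := !![1, -1, 0; 0, 1, -1; 0, 0, 1]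
    let p : Fin 3 → ℝ := ![0, 0, 1]
    let pe : Matrix (Fin 3) (Fin 3) ℝ := Matrix.vecMulVec p (fun _ => (1:ℝ))
    let M : Matrix (Fin 3) (Fin 3) ℝ :=
      R * (R * ((1:Matrix (Fin 3) (Fin 3) ℝ) - pe) + (133:ℝ) • pe)
    spectrum ℝ M = {-7, 5 - Real.sqrt 82, 5 + Real.sqrt 82} ∧
    ∃ t : ℝ, t < 0 ∧ t ∈ spectrum ℝ M := by
  intro R p pe M
  have hpe : pe = !![0, 0, 0; 0, 0, 0; 1, 1, 1] := by
    ext i j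
    simp only [pe, p, vecMulVec_apply, mul_one]
    fin_cases i <;> fin_cases j <;> rfl
  have hM : M = !![0, -3, 0; -131, -130, -133; 132, 132, 133] := by
    simp only [M, hpe, R, one_fin_three, smul_of, of_sub_of]
    norm_num
  have hspec : spectrum ℝ M = {-7, 5 - √82, 5 + √82} := by
    rw [hM, spectrum_eq_of_charpoly_eq_prod (s := {-7, 5 - √82, 5 + √82})
      (by simpa using charpoly_eq_prod_X_sub_C_eigenvalues)]
    simp
  exact ⟨hspec, -7, by norm_num, by simp [hspec]⟩
end

section
/- Let φ: ℝ → ℝ satisfy −ε/2 ≤ φ(x) ≤ x⁺ for all x, where ε > 0 and x⁺ = max(x,0). Let Q̃ be symmetric positive definite, p ∈ ℝ^K, κ > 0, and define V(y) = (e'y)² + κ(y − pφ(e'y))'Q̃(y − pφ(e'y)). Then there exist constants C₁ > 0 and C₂ ≥ 0 such that V(y) ≥ C₁|y|² − C₂ for all y; in particular V(y) → ∞ as |y| → ∞. -/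
open Matrix Filter

/-!
Write `s = e'y` and `z = y - p φ(s)`. Positive definiteness gives `z'Q̃z ≥ μ |z|²`, so
`V(y) ≥ min(1, κμ) (|z|² + s²)`. Conversely `y = z + φ(s) p`, and the two-sided bound on `φ`
gives `φ(s)² ≤ s² + ε²/4`, whence `|y|² ≤ 2|z|² + 2|p|² φ(s)² ≤ 2(1 + |p|²)(|z|² + s²) + |p|² ε²/2`.
Combining the two estimates bounds `|y|²` by an affine function of `V(y)`.
-/

theorem exists_pos_mul_norm_sq_le_of_homogeneous {E : Type*} [NormedAddCommGroup E]
    [NormedSpace ℝ E] [ProperSpace E] {f : E → ℝ} (hf : Continuous f)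
    (hsmul : ∀ (c : ℝ) x, f (c • x) = c ^ 2 * f x) (hpos : ∀ x ≠ 0, 0 < f x) :
    ∃ μ > 0, ∀ x, μ * ‖x‖ ^ 2 ≤ f x := by
  have hf0 : f 0 = 0 := by simpa using hsmul 0 0
  have hsphere : ∀ x ≠ 0, ‖x‖⁻¹ • x ∈ Metric.sphere (0 : E) 1 := fun x hx => by
    simp [norm_smul, hx]
  rcases (Metric.sphere (0 : E) 1).eq_empty_or_nonempty with hempty | hne
  · refine ⟨1, one_pos, fun x => ?_⟩
    obtain rfl : x = 0 := by
      by_contra hx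
      simpa [hempty] using hsphere x hx
    simp [hf0]
  obtain ⟨x₀, hx₀, hmin⟩ := (isCompact_sphere (0 : E) 1).exists_isMinOn hne hf.continuousOn
  refine ⟨f x₀, hpos x₀ (Metric.ne_of_mem_sphere hx₀ one_ne_zero), fun x => ?_⟩
  rcases eq_or_ne x 0 with rfl | hx
  · simp [hf0]
  calc f x₀ * ‖x‖ ^ 2 ≤ f (‖x‖⁻¹ • x) * ‖x‖ ^ 2 := by
        gcongr
        exact hmin (hsphere x hx)
    _ = f x := by
        rw [hsmul]
        field_simp

theorem Matrix.PosDef.exists_pos_mul_sum_sq_le {n : Type*} [Fintype n] {A : Matrix n n ℝ}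
    (hA : A.PosDef) : ∃ μ > 0, ∀ x : n → ℝ, μ * ∑ i, x i ^ 2 ≤ x ⬝ᵥ (A *ᵥ x) := by
  obtain ⟨μ, hμ, hle⟩ := exists_pos_mul_norm_sq_le_of_homogeneous
    (E := EuclideanSpace ℝ n) (f := fun x => x.ofLp ⬝ᵥ (A *ᵥ x.ofLp))
    (by fun_prop) (fun c x => by simp [mulVec_smul]; ring)
    (fun x hx => by simpa using hA.dotProduct_mulVec_pos (x := x.ofLp) (by simpa using hx))
  exact ⟨μ, hμ, fun x => by simpa [EuclideanSpace.real_norm_sq_eq] using hle (WithLp.toLp 2 x)⟩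

theorem sq_le_sq_add_sq_of_neg_le_of_le_max {a x e : ℝ} (h₁ : -e ≤ a) (h₂ : a ≤ max x 0) :
    a ^ 2 ≤ x ^ 2 + e ^ 2 := by
  rcases le_total 0 a with ha | ha
  · have : a ≤ |x| := h₂.trans (max_le (le_abs_self x) (abs_nonneg x))
    nlinarith [sq_abs x]
  · nlinarith

theorem sum_sq_le_two_mul_sum_sq_sub_add {n : Type*} [Fintype n] (y p : n → ℝ) (c : ℝ) :
    ∑ i, y i ^ 2 ≤ 2 * ∑ i, (y i - p i * c) ^ 2 + 2 * c ^ 2 * ∑ i, p i ^ 2 := by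
  calc ∑ i, y i ^ 2 = ∑ i, ((y i - p i * c) + p i * c) ^ 2 := by simp
    _ ≤ ∑ i, 2 * ((y i - p i * c) ^ 2 + (p i * c) ^ 2) := Finset.sum_le_sum fun i _ => add_sq_le
    _ = 2 * ∑ i, (y i - p i * c) ^ 2 + 2 * c ^ 2 * ∑ i, p i ^ 2 := by
        simp only [Finset.mul_sum, ← Finset.sum_add_distrib]
        exact Finset.sum_congr rfl fun i _ => by ring

theorem tendsto_cocompact_atTop_of_mul_norm_sq_sub_le {E : Type*} [NormedAddCommGroup E]
    [ProperSpace E] {f : E → ℝ} {C₁ C₂ : ℝ} (hC₁ : 0 < C₁) (hf : ∀ y, C₁ * ‖y‖ ^ 2 - C₂ ≤ f y) :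
    Tendsto f (cocompact E) atTop := by
  refine tendsto_atTop_mono hf (tendsto_atTop_add_const_right _ (-C₂) ?_)
  exact ((tendsto_pow_atTop two_ne_zero).comp tendsto_norm_cocompact_atTop).const_mul_atTop hC₁

noncomputable def lyapunov {n : Type*} [Fintype n] (κ : ℝ) (φ : ℝ → ℝ) (Q : Matrix n n ℝ)
    (p y : n → ℝ) : ℝ :=
  (∑ i, y i) ^ 2 +
    κ * ((fun i => y i - p i * φ (∑ j, y j)) ⬝ᵥ (Q *ᵥ fun i => y i - p i * φ (∑ j, y j)))

theorem exists_mul_sum_sq_sub_le_lyapunov {n : Type*} [Fintype n] {ε κ : ℝ} (hκ : 0 < κ)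
    {φ : ℝ → ℝ} (hφ₁ : ∀ x, -(ε / 2) ≤ φ x) (hφ₂ : ∀ x, φ x ≤ max x 0)
    {Q : Matrix n n ℝ} (hQ : Q.PosDef) (p : n → ℝ) :
    ∃ C₁ > (0 : ℝ), ∃ C₂ ≥ (0 : ℝ), ∀ y : n → ℝ, C₁ * ∑ i, y i ^ 2 - C₂ ≤ lyapunov κ φ Q p y := by
  obtain ⟨μ, hμ, hQμ⟩ := hQ.exists_pos_mul_sum_sq_le
  set P := ∑ i, p i ^ 2
  set m := min 1 (κ * μ)
  have hP : 0 ≤ P := by positivity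
  have hm : 0 < m := lt_min one_pos (mul_pos hκ hμ)
  refine ⟨m / (2 * (1 + P)), by positivity, m / (2 * (1 + P)) * (P * ε ^ 2 / 2), by positivity,
    fun y => ?_⟩
  set s := ∑ j, y j
  set z : n → ℝ := fun i => y i - p i * φ s
  have hlower : m * (∑ i, z i ^ 2 + s ^ 2) ≤ lyapunov κ φ Q p y := by
    have hz := mul_le_mul_of_nonneg_left (hQμ z) hκ.le
    have hA : 0 ≤ ∑ i, z i ^ 2 := by positivity
    have hmz : m * ∑ i, z i ^ 2 ≤ κ * μ * ∑ i, z i ^ 2 := by gcongr; exact min_le_right _ _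
    have hms : m * s ^ 2 ≤ s ^ 2 := mul_le_of_le_one_left (sq_nonneg s) (min_le_left _ _)
    simp only [lyapunov]
    nlinarith
  have hupper : ∑ i, y i ^ 2 ≤ 2 * (1 + P) * (∑ i, z i ^ 2 + s ^ 2) + P * ε ^ 2 / 2 := by
    have hy := sum_sq_le_two_mul_sum_sq_sub_add y p (φ s)
    have hφs := sq_le_sq_add_sq_of_neg_le_of_le_max (hφ₁ s) (hφ₂ s)
    have hA : 0 ≤ ∑ i, z i ^ 2 := by positivity
    nlinarith [mul_le_mul_of_nonneg_left hφs hP]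
  calc m / (2 * (1 + P)) * ∑ i, y i ^ 2 - m / (2 * (1 + P)) * (P * ε ^ 2 / 2)
      = m / (2 * (1 + P)) * (∑ i, y i ^ 2 - P * ε ^ 2 / 2) := by ring
    _ ≤ m / (2 * (1 + P)) * (2 * (1 + P) * (∑ i, z i ^ 2 + s ^ 2)) := by
        gcongr
        linarith
    _ = m * (∑ i, z i ^ 2 + s ^ 2) := by field_simp
    _ ≤ lyapunov κ φ Q p y := hlower

theorem lyapunov_function_coercive_general {K : ℕ} (ε : ℝ)
    (φ : ℝ → ℝ)
    (hφ₁ : ∀ x, -(ε / 2) ≤ φ x) (hφ₂ : ∀ x, φ x ≤ max x 0)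
    (Q : Matrix (Fin K) (Fin K) ℝ) (hQ : Q.PosDef)
    (p : Fin K → ℝ) (κ : ℝ) (hκ : 0 < κ) :
    (∃ C₁ > (0:ℝ), ∃ C₂ ≥ (0:ℝ), ∀ y : Fin K → ℝ,
      C₁ * (∑ i, (y i) ^ 2) - C₂ ≤
        (∑ i, y i) ^ 2 +
          κ * dotProduct (fun i => y i - p i * φ (∑ j, y j))
            (Q *ᵥ fun i => y i - p i * φ (∑ j, y j))) ∧
    Filter.Tendsto
      (fun y : EuclideanSpace ℝ (Fin K) =>
        (∑ i, y i) ^ 2 +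
          κ * dotProduct (fun i => y i - p i * φ (∑ j, y j))
            (Q *ᵥ fun i => y i - p i * φ (∑ j, y j)))
      (Filter.cocompact (EuclideanSpace ℝ (Fin K))) Filter.atTop := by
  obtain ⟨C₁, hC₁, C₂, hC₂, hV⟩ := exists_mul_sum_sq_sub_le_lyapunov hκ hφ₁ hφ₂ hQ p
  refine ⟨⟨C₁, hC₁, C₂, hC₂, hV⟩, tendsto_cocompact_atTop_of_mul_norm_sq_sub_le (C₂ := C₂) hC₁
    fun y => ?_⟩
  rw [EuclideanSpace.real_norm_sq_eq]
  exact hV y.ofLp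

/-- Let `φ : ℝ → ℝ` satisfy `−ε/2 ≤ φ(x) ≤ x⁺` and `x⁺ − φ(x) ≤ ε/2` for all `x`,
with `ε > 0`. Let `Q̃` be symmetric positive definite, `p ∈ ℝ^K`, `κ > 0`, and
`V(y) = (e'y)² + κ (y − pφ(e'y))' Q̃ (y − pφ(e'y))`. Then there exist `C₁ > 0` and
`C₂ ≥ 0` with `V(y) ≥ C₁|y|² − C₂` for all `y`; in particular `V(y) → ∞` as `|y| → ∞`. -/
theorem lyapunov_function_coercive {K : ℕ} (ε : ℝ) (hε : 0 < ε)
    (φ : ℝ → ℝ)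
    (hφ₁ : ∀ x, -(ε / 2) ≤ φ x) (hφ₂ : ∀ x, φ x ≤ max x 0)
    (hφ₃ : ∀ x, max x 0 - φ x ≤ ε / 2)
    (Q : Matrix (Fin K) (Fin K) ℝ) (hQsymm : Q.IsSymm) (hQ : Q.PosDef)
    (p : Fin K → ℝ) (κ : ℝ) (hκ : 0 < κ) :
    (∃ C₁ > (0:ℝ), ∃ C₂ ≥ (0:ℝ), ∀ y : Fin K → ℝ,
      C₁ * (∑ i, (y i) ^ 2) - C₂ ≤
        (∑ i, y i) ^ 2 +
          κ * dotProduct (fun i => y i - p i * φ (∑ j, y j))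
            (Q *ᵥ fun i => y i - p i * φ (∑ j, y j))) ∧
    Filter.Tendsto
      (fun y : EuclideanSpace ℝ (Fin K) =>
        (∑ i, y i) ^ 2 +
          κ * dotProduct (fun i => y i - p i * φ (∑ j, y j))
            (Q *ᵥ fun i => y i - p i * φ (∑ j, y j)))
      (Filter.cocompact (EuclideanSpace ℝ (Fin K))) Filter.atTop :=
  lyapunov_function_coercive_general ε φ hφ₁ hφ₂ Q hQ p κ hκ
end
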